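/- arXiv:1104.0268 — 8 statements merged into one kernel-verified Lean document; each statement's English description precedes it below -/
import Mathlib

section
/- Let I be a two-sided ideal of T which is homogeneous with respect to the ℕ^θ-grading. Let S and S' be two minimal sets of homogeneous generators of I (each generates I as a two-sided ideal, and no proper subset does), and assume that for each α ∈ ℕ^θ the set S contains at most one element of degree α, and similarly for S'. For α ∈ ℕ^θ, let I(S,α) denote the two-sided ideal generated by the elements of S of degree β with β ≤ α componentwise and β ≠ α (and similarly I(S',α)). Then: for each s ∈ S of degree α there exist t ∈ S' of degree α and c ∈ kˣ such that s − c·t ∈ I(S,α); and moreover I(S,α) = I(S',α) for every α. -/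
/-!
The degree-`α` component of `a * t * b`, for `t` homogeneous of degree `β`, is a scalar multiple
of `t` when `β = α`, lies in the ideal generated by `t` when `β < α`, and vanishes otherwise.
Since taking components is additive, every element of degree `α` of the ideal generated by `S`
lies in `I(S,α) + k · {t ∈ S | deg t = α}`. Applied to the generators of `S` of degree `< α`,
this gives `I(S,α) ⊆ I(S',α)`, hence equality by symmetry. Applied to `s ∈ S` of degree `α` it
writes `s` modulo `I(S,α)` as a multiple of the unique `t ∈ S'` of degree `α`, and minimality of
`S` forbids `s ∈ I(S,α)`, so the multiple is nonzero.
-/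

/-- The multidegree in `ℕ^θ` of a word in the letters `x_1, …, x_θ`. -/
def wordDegree {θ : ℕ} (w : FreeMonoid (Fin θ)) : Fin θ → ℕ :=
  fun i => (FreeMonoid.toList w).count i

/-- An element of the free algebra `T = k⟨x_1,…,x_θ⟩` (realized as the monoid algebra of
the free monoid on `θ` letters) is homogeneous of multidegree `α ∈ ℕ^θ` if it is a linear
combination of words of multidegree `α`. -/
def IsHomogeneous {k : Type*} [Field k] {θ : ℕ} (α : Fin θ → ℕ)
    (s : MonoidAlgebra k (FreeMonoid (Fin θ))) : Prop :=
  ∀ w ∈ s.coeff.support, wordDegree w = α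

/-- `lowerIdeal k S α` is the two-sided ideal `I(S,α)` generated by the elements of `S`
whose degree `β` satisfies `β ≤ α` componentwise and `β ≠ α`. -/
noncomputable def lowerIdeal (k : Type*) [Field k] {θ : ℕ}
    (S : Set (MonoidAlgebra k (FreeMonoid (Fin θ)))) (α : Fin θ → ℕ) :
    TwoSidedIdeal (MonoidAlgebra k (FreeMonoid (Fin θ))) :=
  TwoSidedIdeal.span {s | s ∈ S ∧ ∃ β : Fin θ → ℕ, IsHomogeneous β s ∧ β ≤ α ∧ β ≠ α}

open MonoidAlgebra

section Grading

variable {k : Type*} [Field k] {θ : ℕ}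

local notation "T" => MonoidAlgebra k (FreeMonoid (Fin θ))

lemma wordDegree_one : wordDegree (1 : FreeMonoid (Fin θ)) = 0 := rfl

lemma wordDegree_mul (u v : FreeMonoid (Fin θ)) :
    wordDegree (u * v) = wordDegree u + wordDegree v := by
  funext i
  simp [wordDegree, List.count_append]

lemma wordDegree_eq_zero_iff {w : FreeMonoid (Fin θ)} : wordDegree w = 0 ↔ w = 1 := by
  refine ⟨fun h => ?_, fun h => h ▸ wordDegree_one⟩
  rw [← FreeMonoid.length_eq_zero, FreeMonoid.length, List.length_eq_zero_iff,
    List.eq_nil_iff_forall_not_mem]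
  exact fun i hi => (List.count_pos_iff.mpr hi).ne' (congrFun h i)

lemma wordDegree_add_add_wordDegree_eq_iff {u v : FreeMonoid (Fin θ)} {α : Fin θ → ℕ} :
    wordDegree u + α + wordDegree v = α ↔ u = 1 ∧ v = 1 := by
  rw [add_right_comm, add_eq_right, add_eq_zero, wordDegree_eq_zero_iff, wordDegree_eq_zero_iff]

lemma isHomogeneous_single (w : FreeMonoid (Fin θ)) (c : k) :
    IsHomogeneous (wordDegree w) (single w c : T) := fun _ hu => by
  rw [Finset.mem_singleton.mp (Finsupp.support_single_subset hu)]

lemma IsHomogeneous.mul {α β : Fin θ → ℕ} {f g : T} (hf : IsHomogeneous α f)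
    (hg : IsHomogeneous β g) : IsHomogeneous (α + β) (f * g) := by
  classical
  intro w hw
  obtain ⟨u, hu, v, hv, rfl⟩ := Finset.mem_mul.mp (support_coeff_mul_subset f g hw)
  rw [wordDegree_mul, hf u hu, hg v hv]

lemma IsHomogeneous.eq_zero_of_ne {α β : Fin θ → ℕ} {f : T} (hα : IsHomogeneous α f)
    (hβ : IsHomogeneous β f) (hne : α ≠ β) : f = 0 := by
  rw [← coeff_eq_zero, ← Finsupp.support_eq_empty]
  exact Finset.eq_empty_of_forall_notMem fun w hw => hne ((hα w hw).symm.trans (hβ w hw))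

open Classical in
noncomputable def homogeneousComponent (α : Fin θ → ℕ) : T →+ T :=
  coeffAddEquiv.symm.toAddMonoidHom.comp
    ((Finsupp.filterAddHom (wordDegree · = α)).comp coeffAddEquiv.toAddMonoidHom)

open Classical in
lemma coeff_homogeneousComponent (α : Fin θ → ℕ) (f : T) :
    (homogeneousComponent α f).coeff = f.coeff.filter (wordDegree · = α) := rfl

lemma homogeneousComponent_of_isHomogeneous {α : Fin θ → ℕ} {f : T}
    (hf : IsHomogeneous α f) : homogeneousComponent α f = f := by
  rw [← coeff_inj, coeff_homogeneousComponent, Finsupp.filter_eq_self_iff]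
  exact fun w hw => hf w (Finsupp.mem_support_iff.mpr hw)

lemma homogeneousComponent_of_isHomogeneous_of_ne {α β : Fin θ → ℕ} {f : T}
    (hf : IsHomogeneous β f) (hne : β ≠ α) : homogeneousComponent α f = 0 := by
  rw [← coeff_eq_zero, coeff_homogeneousComponent, Finsupp.filter_eq_zero_iff]
  exact fun w hw => Finsupp.notMem_support_iff.mp fun hsupp => hne ((hf w hsupp).symm.trans hw)

section Sandwich

variable {β : Fin θ → ℕ} {t : MonoidAlgebra k (FreeMonoid (Fin θ))}

lemma homogeneousComponent_single_mul_mul_single (ht : IsHomogeneous β t) (α : Fin θ → ℕ)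
    (w v : FreeMonoid (Fin θ)) (c d : k) :
    homogeneousComponent α (single w c * t * single v d) =
      if wordDegree w + β + wordDegree v = α then single w c * t * single v d else 0 := by
  have h := ((isHomogeneous_single w c).mul ht).mul (isHomogeneous_single v d)
  split_ifs with hα
  · exact homogeneousComponent_of_isHomogeneous (hα ▸ h)
  · exact homogeneousComponent_of_isHomogeneous_of_ne h hα

lemma homogeneousComponent_mul_mul_mem_span_singleton (ht : IsHomogeneous β t) (α : Fin θ → ℕ)
    (a b : T) : homogeneousComponent α (a * t * b) ∈ TwoSidedIdeal.span {t} := by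
  induction a using MonoidAlgebra.induction_linear with
  | zero => simp
  | add f g hf hg => rw [add_mul, add_mul, map_add]; exact add_mem hf hg
  | single w c =>
    induction b using MonoidAlgebra.induction_linear with
    | zero => simp
    | add f g hf hg => rw [mul_add, map_add]; exact add_mem hf hg
    | single v d =>
      rw [homogeneousComponent_single_mul_mul_single ht]
      split_ifs
      · exact TwoSidedIdeal.mul_mem_right _ _ _
          (TwoSidedIdeal.mul_mem_left _ _ _ (TwoSidedIdeal.subset_span rfl))
      · exact zero_mem _

lemma homogeneousComponent_mul_mul_eq_zero_of_not_le (ht : IsHomogeneous β t) {α : Fin θ → ℕ}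
    (hβα : ¬β ≤ α) (a b : T) : homogeneousComponent α (a * t * b) = 0 := by
  induction a using MonoidAlgebra.induction_linear with
  | zero => simp
  | add f g hf hg => rw [add_mul, add_mul, map_add, hf, hg, add_zero]
  | single w c =>
    induction b using MonoidAlgebra.induction_linear with
    | zero => simp
    | add f g hf hg => rw [mul_add, map_add, hf, hg, add_zero]
    | single v d =>
      rw [homogeneousComponent_single_mul_mul_single ht, if_neg]
      rintro rfl
      exact hβα (le_add_right le_add_self)

lemma homogeneousComponent_mul_mul_of_isHomogeneous (ht : IsHomogeneous β t) (a b : T) :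
    homogeneousComponent β (a * t * b) = (a.coeff 1 * b.coeff 1) • t := by
  induction a using MonoidAlgebra.induction_linear with
  | zero => simp
  | add f g hf hg => rw [add_mul, add_mul, map_add, hf, hg, coeff_add, Finsupp.add_apply,
      add_mul, add_smul]
  | single w c =>
    induction b using MonoidAlgebra.induction_linear with
    | zero => simp
    | add f g hf hg => rw [mul_add, map_add, hf, hg, coeff_add, Finsupp.add_apply, mul_add,
      add_smul]
    | single v d =>
      rw [homogeneousComponent_single_mul_mul_single ht]
      split_ifs with h
      · obtain ⟨rfl, rfl⟩ := wordDegree_add_add_wordDegree_eq_iff.mp h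
        have hsingle (r : k) : (single 1 r : T) = algebraMap k _ r := rfl
        simp only [coeff_single, Finsupp.single_eq_same]
        rw [hsingle, hsingle, ← Algebra.commutes, ← Algebra.smul_def, ← Algebra.smul_def,
          smul_smul, mul_comm]
      · rw [wordDegree_add_add_wordDegree_eq_iff, not_and_or] at h
        rcases h with h | h <;> simp [coeff_single, h]

end Sandwich

section LowerIdeal

variable {S S' : Set (MonoidAlgebra k (FreeMonoid (Fin θ)))}

lemma mem_lowerIdeal_of_lt {s : T} {α β : Fin θ → ℕ} (hs : s ∈ S)
    (hβ : IsHomogeneous β s) (hβα : β < α) : s ∈ lowerIdeal k S α :=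
  TwoSidedIdeal.subset_span ⟨hs, β, hβ, hβα.le, hβα.ne⟩

lemma lowerIdeal_mono : Monotone (lowerIdeal k S) := fun _ _ hβα =>
  TwoSidedIdeal.span_le.mpr fun _ ⟨hs, _, hγ, hγβ, hγne⟩ =>
    mem_lowerIdeal_of_lt hs hγ ((lt_of_le_of_ne hγβ hγne).trans_le hβα)

theorem mem_lowerIdeal_sup_span_of_isHomogeneous (hS : ∀ s ∈ S, ∃ β, IsHomogeneous β s)
    {α : Fin θ → ℕ} {x : T} (hx : x ∈ TwoSidedIdeal.span S) (hxα : IsHomogeneous α x) :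
    x ∈ (lowerIdeal k S α).asIdeal.restrictScalars k ⊔
      Submodule.span k {t | t ∈ S ∧ IsHomogeneous α t} := by
  rw [← homogeneousComponent_of_isHomogeneous hxα]
  -- Quantifying over all `a * x * b` makes the claim stable under the absorption steps below.
  suffices h : ∀ a b : T, homogeneousComponent α (a * x * b) ∈
      (lowerIdeal k S α).asIdeal.restrictScalars k ⊔
        Submodule.span k {t | t ∈ S ∧ IsHomogeneous α t} by
    simpa using h 1 1
  clear hxα
  induction hx using TwoSidedIdeal.span_induction with
  | mem t ht =>
    intro a b
    obtain ⟨β, hβ⟩ := hS t ht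
    rcases eq_or_ne β α with rfl | hne
    · rw [homogeneousComponent_mul_mul_of_isHomogeneous hβ]
      exact Submodule.mem_sup_right (Submodule.smul_mem _ _ (Submodule.subset_span ⟨ht, hβ⟩))
    by_cases hle : β ≤ α
    · refine Submodule.mem_sup_left ?_
      have hspan : TwoSidedIdeal.span {t} ≤ lowerIdeal k S α :=
        TwoSidedIdeal.span_le.mpr
          (Set.singleton_subset_iff.mpr (mem_lowerIdeal_of_lt ht hβ (lt_of_le_of_ne hle hne)))
      exact hspan (homogeneousComponent_mul_mul_mem_span_singleton hβ α a b)
    · rw [homogeneousComponent_mul_mul_eq_zero_of_not_le hβ hle]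
      exact zero_mem _
  | zero => simp
  | add x y _ _ hx hy =>
    intro a b
    rw [mul_add, add_mul, map_add]
    exact add_mem (hx a b) (hy a b)
  | neg x _ hx =>
    intro a b
    rw [mul_neg, neg_mul, map_neg]
    exact neg_mem (hx a b)
  | left_absorb c x _ hx => exact fun a b => by simpa only [mul_assoc] using hx (a * c) b
  | right_absorb c x _ hx => exact fun a b => by simpa only [mul_assoc] using hx a (c * b)

lemma lowerIdeal_le_lowerIdeal (hS' : ∀ t ∈ S', ∃ β, IsHomogeneous β t)
    (hSS' : S ⊆ TwoSidedIdeal.span S') (α : Fin θ → ℕ) :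
    lowerIdeal k S α ≤ lowerIdeal k S' α := by
  refine TwoSidedIdeal.span_le.mpr ?_
  rintro x ⟨hx, β, hβ, hβα, hβne⟩
  have hlt : β < α := lt_of_le_of_ne hβα hβne
  refine (sup_le ?_ ?_ : _ ≤ (lowerIdeal k S' α).asIdeal.restrictScalars k)
    (mem_lowerIdeal_sup_span_of_isHomogeneous hS' (hSS' hx) hβ)
  · exact fun y hy => lowerIdeal_mono hlt.le hy
  · exact Submodule.span_le.mpr fun t ⟨ht, htβ⟩ => mem_lowerIdeal_of_lt ht htβ hlt

lemma lowerIdeal_le_span_diff_singleton {s : T} {α : Fin θ → ℕ} (hs : IsHomogeneous α s) :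
    lowerIdeal k S α ≤ TwoSidedIdeal.span (S \ {s}) := by
  refine TwoSidedIdeal.span_le.mpr ?_
  rintro x ⟨hx, β, hβ, -, hβα⟩
  by_cases hxs : x = s
  · subst hxs
    rw [hβ.eq_zero_of_ne hs hβα]
    exact zero_mem _
  · exact TwoSidedIdeal.subset_span ⟨hx, hxs⟩

lemma notMem_lowerIdeal_of_span_diff_singleton_ne {s : T} {α : Fin θ → ℕ}
    (hsα : IsHomogeneous α s) (hmin : TwoSidedIdeal.span (S \ {s}) ≠ TwoSidedIdeal.span S) :
    s ∉ lowerIdeal k S α := by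
  intro hlow
  refine hmin (le_antisymm (TwoSidedIdeal.span_mono Set.sdiff_subset)
    (TwoSidedIdeal.span_le.mpr fun x hx => ?_))
  by_cases hxs : x = s
  · exact hxs ▸ lowerIdeal_le_span_diff_singleton hsα hlow
  · exact TwoSidedIdeal.subset_span ⟨hx, hxs⟩

end LowerIdeal

end Grading

theorem Submodule.exists_sub_unit_smul_mem_of_mem_sup_span {K V : Type*} [DivisionRing K]
    [AddCommGroup V] [Module K V] {N : Submodule K V} {A : Set V} (hA : A.Subsingleton) {x : V}
    (hx : x ∈ N ⊔ span K A) (hxN : x ∉ N) :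
    ∃ t ∈ A, ∃ c : Kˣ, x - (c : K) • t ∈ N := by
  obtain rfl | ⟨t, rfl⟩ := hA.eq_empty_or_singleton
  · rw [span_empty, sup_bot_eq] at hx
    exact absurd hx hxN
  obtain ⟨y, hy, z, hz, rfl⟩ := mem_sup.mp hx
  obtain ⟨c, rfl⟩ := mem_span_singleton.mp hz
  have hc : c ≠ 0 := by
    rintro rfl
    simp [hy] at hxN
  exact ⟨t, rfl, Units.mk0 c hc, by simpa using hy⟩

theorem minimal_homogeneous_generators_correspond_general
    {k : Type*} [Field k] {θ : ℕ}
    (I : TwoSidedIdeal (MonoidAlgebra k (FreeMonoid (Fin θ))))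
    (S S' : Set (MonoidAlgebra k (FreeMonoid (Fin θ))))
    (hS : TwoSidedIdeal.span S = I) (hS' : TwoSidedIdeal.span S' = I)
    (hSmin : ∀ s ∈ S, TwoSidedIdeal.span (S \ {s}) ≠ I)
    (hShom : ∀ s ∈ S, ∃ α : Fin θ → ℕ, IsHomogeneous α s)
    (hS'hom : ∀ s ∈ S', ∃ α : Fin θ → ℕ, IsHomogeneous α s)
    (hS'uniq : ∀ s ∈ S', ∀ t ∈ S', ∀ α : Fin θ → ℕ,
      IsHomogeneous α s → IsHomogeneous α t → s = t) :
    (∀ s ∈ S, ∀ α : Fin θ → ℕ, IsHomogeneous α s →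
      ∃ t ∈ S', IsHomogeneous α t ∧ ∃ c : kˣ, s - (c : k) • t ∈ lowerIdeal k S α) ∧
    (∀ α : Fin θ → ℕ, lowerIdeal k S α = lowerIdeal k S' α) := by
  have hSS' : S ⊆ TwoSidedIdeal.span S' := hS' ▸ hS ▸ TwoSidedIdeal.subset_span
  have hS'S : S' ⊆ TwoSidedIdeal.span S := hS ▸ hS' ▸ TwoSidedIdeal.subset_span
  have hlower (α : Fin θ → ℕ) : lowerIdeal k S α = lowerIdeal k S' α :=
    le_antisymm (lowerIdeal_le_lowerIdeal hS'hom hSS' α) (lowerIdeal_le_lowerIdeal hShom hS'S α)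
  refine ⟨fun s hs α hsα => ?_, hlower⟩
  have hsN : s ∉ lowerIdeal k S α :=
    notMem_lowerIdeal_of_span_diff_singleton_ne hsα (hS ▸ hSmin s hs)
  have hsP := mem_lowerIdeal_sup_span_of_isHomogeneous hS'hom (hSS' hs) hsα
  rw [← hlower] at hsP
  obtain ⟨t, ⟨htS', htα⟩, c, hc⟩ := Submodule.exists_sub_unit_smul_mem_of_mem_sup_span
    (fun t ht t' ht' => hS'uniq t ht.1 t' ht'.1 α ht.2 ht'.2) hsP hsN
  exact ⟨t, htS', htα, c, hc⟩

/-- Two minimal sets `S`, `S'` of homogeneous generators of a homogeneous two-sided ideal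
`I` of the free algebra, with at most one generator in each multidegree, agree degree by
degree up to scalars and lower terms; in particular `I(S,α) = I(S',α)` for every `α`. -/
theorem minimal_homogeneous_generators_correspond
    {k : Type*} [Field k] {θ : ℕ} (hθ : 1 ≤ θ)
    (I : TwoSidedIdeal (MonoidAlgebra k (FreeMonoid (Fin θ))))
    (hI : TwoSidedIdeal.span {x | x ∈ I ∧ ∃ α : Fin θ → ℕ, IsHomogeneous α x} = I)
    (S S' : Set (MonoidAlgebra k (FreeMonoid (Fin θ))))
    (hS : TwoSidedIdeal.span S = I) (hS' : TwoSidedIdeal.span S' = I)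
    (hSmin : ∀ s ∈ S, TwoSidedIdeal.span (S \ {s}) ≠ I)
    (hS'min : ∀ s ∈ S', TwoSidedIdeal.span (S' \ {s}) ≠ I)
    (hShom : ∀ s ∈ S, ∃ α : Fin θ → ℕ, IsHomogeneous α s)
    (hS'hom : ∀ s ∈ S', ∃ α : Fin θ → ℕ, IsHomogeneous α s)
    (hSuniq : ∀ s ∈ S, ∀ t ∈ S, ∀ α : Fin θ → ℕ,
      IsHomogeneous α s → IsHomogeneous α t → s = t)
    (hS'uniq : ∀ s ∈ S', ∀ t ∈ S', ∀ α : Fin θ → ℕ,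
      IsHomogeneous α s → IsHomogeneous α t → s = t) :
    (∀ s ∈ S, ∀ α : Fin θ → ℕ, IsHomogeneous α s →
      ∃ t ∈ S', IsHomogeneous α t ∧ ∃ c : kˣ, s - (c : k) • t ∈ lowerIdeal k S α) ∧
    (∀ α : Fin θ → ℕ, lowerIdeal k S α = lowerIdeal k S' α) :=
  minimal_homogeneous_generators_correspond_general I S S' hS hS' hSmin hShom hS'hom hS'uniq
end

section
/- Let x ∈ ker π be a nonzero homogeneous element of degree m ≥ 2 which is of minimal degree, in the sense that ker π ∩ R(n) = 0 for all n < m. Then x is a primitive element of R: Δ(x) = x ⊗ 1 + 1 ⊗ x. -/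
/-!
Let `q = id - η ∘ ε` be the projection of `R` onto its augmentation ideal. The counit axioms give
`(q ⊗ q)(Δx) = Δx - x ⊗ 1 - 1 ⊗ x + ε(x) (1 ⊗ 1)`, and `ε(x) = 0` since `x` has positive degree.
As `q` kills `R(0) = k·1` and fixes every `R(n)` with `n ≥ 1`, the element `(q ⊗ q)(Δx)` lies in
`V ⊗ V` for `V = ⊕_{n<m} R(n)`. The kernel of `π` is graded and meets no `R(n)` with `n < m`, so `π`
is injective on `V`, hence `π ⊗ π` is injective on `V ⊗ V`; but
`(π ⊗ π)((q ⊗ q)(Δx)) = (q ⊗ q)(Δ(πx)) = 0`.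
-/

open TensorProduct
open Coalgebra (comul counit)

section augmentation

variable (k : Type*) {A B : Type*} [CommRing k] [Ring A] [Ring B] [Bialgebra k A]
  [Bialgebra k B]

noncomputable def augmentationProj : A →ₗ[k] A :=
  LinearMap.id - Algebra.linearMap k A ∘ₗ counit

variable {k}

lemma augmentationProj_apply (a : A) :
    augmentationProj k a = a - algebraMap k A (counit a) := rfl

lemma augmentationProj_eq_zero_of_mem_one {a : A} (ha : a ∈ (1 : Submodule k A)) :
    augmentationProj k a = 0 := by
  obtain ⟨c, rfl⟩ := Submodule.mem_one.mp ha
  rw [augmentationProj_apply, Bialgebra.counit_algebraMap, sub_self]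

lemma augmentationProj_eq_self {a : A} (ha : counit (R := k) a = 0) :
    augmentationProj k a = a := by
  rw [augmentationProj_apply, ha, map_zero, sub_zero]

lemma map_augmentationProj_comul (a : A) :
    map (augmentationProj k) (augmentationProj k) (comul a) =
      comul (R := k) a - a ⊗ₜ 1 - 1 ⊗ₜ a + counit (R := k) a • (1 ⊗ₜ 1 : A ⊗[k] A) := by
  have hl : LinearMap.rTensor A (Algebra.linearMap k A ∘ₗ counit) (comul a) = 1 ⊗ₜ a := by
    rw [LinearMap.rTensor_comp_apply, Coalgebra.rTensor_counit_comul, LinearMap.rTensor_tmul,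
      Algebra.linearMap_apply, map_one]
  have hr : LinearMap.lTensor A (Algebra.linearMap k A ∘ₗ counit) (comul a) = a ⊗ₜ 1 := by
    rw [LinearMap.lTensor_comp_apply, Coalgebra.lTensor_counit_comul, LinearMap.lTensor_tmul,
      Algebra.linearMap_apply, map_one]
  set e := Algebra.linearMap k A ∘ₗ counit (R := k) (A := A)
  have hsplit : map (augmentationProj k) (augmentationProj k) =
      LinearMap.id - LinearMap.rTensor A e - LinearMap.lTensor A e +
        LinearMap.rTensor A e ∘ₗ LinearMap.lTensor A e := by
    refine TensorProduct.ext' fun u v => ?_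
    simp only [augmentationProj, map_tmul, LinearMap.sub_apply, LinearMap.add_apply,
      LinearMap.comp_apply, LinearMap.rTensor_tmul, LinearMap.lTensor_tmul, LinearMap.id_apply,
      tmul_sub, sub_tmul]
    abel
  rw [hsplit, LinearMap.add_apply, LinearMap.sub_apply, LinearMap.sub_apply, LinearMap.comp_apply,
    hl, hr, LinearMap.rTensor_tmul, LinearMap.id_apply, LinearMap.comp_apply,
    Algebra.linearMap_apply, Algebra.algebraMap_eq_smul_one, smul_tmul']
  abel

lemma comul_eq_tmul_one_add_one_tmul_iff {a : A} (ha : counit (R := k) a = 0) :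
    comul (R := k) a = a ⊗ₜ 1 + 1 ⊗ₜ a ↔
      map (augmentationProj k) (augmentationProj k) (comul (R := k) a) = 0 := by
  rw [map_augmentationProj_comul, ha, zero_smul, add_zero, sub_sub, sub_eq_zero,
    add_comm (a ⊗ₜ 1)]

lemma map_map_augmentationProj_comul (π : A →ₐc[k] B) (a : A) :
    map (π : A →ₗ[k] B) π (map (augmentationProj k) (augmentationProj k) (comul a)) =
      map (augmentationProj k) (augmentationProj k) (comul (π a)) := by
  have hπ : (π : A →ₗ[k] B) ∘ₗ augmentationProj k =
      augmentationProj k ∘ₗ (π : A →ₗ[k] B) := by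
    ext a
    simp [augmentationProj_apply, CoalgHomClass.counit_comp_apply, AlgHomClass.commutes]
  rw [map_map, hπ, ← map_map, CoalgHomClass.map_comp_comul_apply]

end augmentation

lemma disjoint_biSup_Iio_of_le_span_homogeneous {k M : Type*} [CommRing k] [AddCommGroup M]
    [Module k M] {ℛ : ℕ → Submodule k M} (hℛ : iSupIndep ℛ) {K : Submodule k M}
    (hK : K ≤ Submodule.span k {z | z ∈ K ∧ ∃ n, z ∈ ℛ n}) {m : ℕ}
    (hmin : ∀ n < m, ∀ y ∈ ℛ n, y ∈ K → y = 0) :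
    Disjoint (⨆ n ∈ Set.Iio m, ℛ n) K := by
  have hKge : K ≤ ⨆ n ∈ Set.Ici m, ℛ n := by
    refine hK.trans (Submodule.span_le.mpr ?_)
    rintro z ⟨hzK, n, hzn⟩
    by_cases hn : n < m
    · rw [hmin n hn z hzn hzK]
      exact zero_mem _
    · exact Submodule.mem_iSup_of_mem n (Submodule.mem_iSup_of_mem (not_lt.mp hn) hzn)
  exact (hℛ.disjoint_biSup_biSup (Set.Iio_disjoint_Ici le_rfl)).mono_right hKge

lemma eq_zero_of_mem_range_mapIncl_of_map_eq_zero {k M N : Type*} [CommRing k]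
    [AddCommGroup M] [Module k M] [AddCommGroup N] [Module k N] [Module.Flat k N] (f : M →ₗ[k] N)
    {V : Submodule k M} [Module.Flat k V] (hV : Disjoint V (LinearMap.ker f))
    {y : M ⊗[k] M} (hy : y ∈ LinearMap.range (mapIncl V V)) (hfy : map f f y = 0) : y = 0 := by
  obtain ⟨w, rfl⟩ := hy
  have hinj : Function.Injective (f ∘ₗ V.subtype) := by
    rw [← LinearMap.ker_eq_bot, LinearMap.ker_comp, ← Submodule.disjoint_iff_comap_eq_bot]
    exact hV
  rw [map_map] at hfy
  rw [map_injective_of_flat_flat _ _ hinj hinj (hfy.trans (map_zero _).symm), map_zero]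

section graded

variable {k R : Type*} [CommRing k] [Ring R] [Bialgebra k R] {ℛ : ℕ → Submodule k R}

lemma map₂_augmentationProj_le_biSup_Iio (hzero : ℛ 0 = 1)
    (hcounit : ∀ n : ℕ, 1 ≤ n → ∀ x ∈ ℛ n, counit (R := k) x = 0) {m : ℕ} {p : ℕ × ℕ}
    (hp : p ∈ Finset.HasAntidiagonal.antidiagonal m) :
    Submodule.map₂ (mk k R R) ((ℛ p.1).map (augmentationProj k))
      ((ℛ p.2).map (augmentationProj k)) ≤
      Submodule.map₂ (mk k R R) (⨆ n ∈ Set.Iio m, ℛ n) (⨆ n ∈ Set.Iio m, ℛ n) := by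
  have hbot : (ℛ 0).map (augmentationProj k) = ⊥ := by
    refine eq_bot_iff.mpr ?_
    rintro _ ⟨a, ha, rfl⟩
    exact (Submodule.mem_bot k).mpr (augmentationProj_eq_zero_of_mem_one (hzero ▸ ha))
  have hle : ∀ n, 1 ≤ n → n < m → (ℛ n).map (augmentationProj k) ≤ ⨆ n ∈ Set.Iio m, ℛ n := by
    rintro n hn hnm _ ⟨a, ha, rfl⟩
    rw [augmentationProj_eq_self (hcounit n hn a ha)]
    exact Submodule.mem_iSup_of_mem n (Submodule.mem_iSup_of_mem hnm ha)
  obtain ⟨i, j⟩ := p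
  rw [Finset.HasAntidiagonal.mem_antidiagonal] at hp
  rcases Nat.eq_zero_or_pos i with rfl | hi
  · rw [hbot, Submodule.map₂_bot_left]
    exact bot_le
  rcases Nat.eq_zero_or_pos j with rfl | hj
  · rw [hbot, Submodule.map₂_bot_right]
    exact bot_le
  exact Submodule.map₂_le_map₂ (hle i hi (by omega)) (hle j hj (by omega))

lemma map_augmentationProj_comul_mem_range_mapIncl (hzero : ℛ 0 = 1)
    (hcounit : ∀ n : ℕ, 1 ≤ n → ∀ x ∈ ℛ n, counit (R := k) x = 0) {m : ℕ} {x : R}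
    (hx : comul (R := k) x ∈
      ⨆ p ∈ Finset.HasAntidiagonal.antidiagonal m, LinearMap.range (mapIncl (ℛ p.1) (ℛ p.2))) :
    map (augmentationProj k) (augmentationProj k) (comul (R := k) x) ∈
      LinearMap.range (mapIncl (⨆ n ∈ Set.Iio m, ℛ n) (⨆ n ∈ Set.Iio m, ℛ n)) := by
  refine Submodule.map_le_iff_le_comap.mpr (iSup₂_le fun p hp => ?_)
    (Submodule.mem_map_of_mem hx)
  rw [← Submodule.map_le_iff_le_comap, ← LinearMap.range_comp, ← map_comp, range_mapIncl,
    range_map, LinearMap.range_comp, LinearMap.range_comp, Submodule.range_subtype,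
    Submodule.range_subtype]
  exact map₂_augmentationProj_le_biSup_Iio hzero hcounit hp

end graded

theorem minimal_degree_kernel_element_is_primitive_general
    {k : Type*} [Field k] {R B : Type*} [Ring R] [Ring B]
    [Bialgebra k R] [Bialgebra k B]
    (π : R →ₐc[k] B)
    (ℛ : ℕ → Submodule k R)
    (hinternal : DirectSum.IsInternal ℛ)
    (hzero : ℛ 0 = (1 : Submodule k R))
    (hcomul : ∀ n : ℕ, ∀ x ∈ ℛ n, Coalgebra.comul (R := k) x ∈
        ⨆ p ∈ Finset.HasAntidiagonal.antidiagonal n,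
          LinearMap.range (TensorProduct.map (ℛ p.1).subtype (ℛ p.2).subtype))
    (hcounit : ∀ n : ℕ, 1 ≤ n → ∀ x ∈ ℛ n, Coalgebra.counit (R := k) x = 0)
    (hker : ∀ y : R, π y = 0 →
        y ∈ Submodule.span k {z : R | π z = 0 ∧ ∃ n : ℕ, z ∈ ℛ n})
    (x : R) (hxker : π x = 0) (m : ℕ) (hm : 2 ≤ m) (hxmem : x ∈ ℛ m)
    (hmin : ∀ n : ℕ, n < m → ∀ y ∈ ℛ n, π y = 0 → y = 0) :
    Coalgebra.comul (R := k) x = x ⊗ₜ[k] 1 + 1 ⊗ₜ[k] x := by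
  have hx_counit : counit (R := k) x = 0 := hcounit m (by omega) x hxmem
  have hV : Disjoint (⨆ n ∈ Set.Iio m, ℛ n) (LinearMap.ker (π : R →ₗ[k] B)) :=
    disjoint_biSup_Iio_of_le_span_homogeneous hinternal.submodule_iSupIndep hker hmin
  rw [comul_eq_tmul_one_add_one_tmul_iff hx_counit]
  refine eq_zero_of_mem_range_mapIncl_of_map_eq_zero (π : R →ₗ[k] B) hV
    (map_augmentationProj_comul_mem_range_mapIncl hzero hcounit (hcomul m x hxmem)) ?_
  rw [map_map_augmentationProj_comul, hxker, map_zero, map_zero]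

/-- Let `π : R → B` be a surjective bialgebra homomorphism from a graded bialgebra
`R = ⊕ₙ R(n)` (with `R(0) = k·1`, a multiplicative and comultiplicative grading) whose
kernel is a graded submodule.  A nonzero homogeneous element of `ker π` of minimal
degree `m ≥ 2` is primitive: `Δ(x) = x ⊗ 1 + 1 ⊗ x`. -/
theorem minimal_degree_kernel_element_is_primitive
    {k : Type*} [Field k] {R B : Type*} [Ring R] [Ring B]
    [Bialgebra k R] [Bialgebra k B]
    (π : R →ₐc[k] B) (hπ : Function.Surjective π)
    (ℛ : ℕ → Submodule k R)
    (hinternal : DirectSum.IsInternal ℛ)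
    (hzero : ℛ 0 = (1 : Submodule k R))
    (hmul : ∀ i j : ℕ, ℛ i * ℛ j ≤ ℛ (i + j))
    (hcomul : ∀ n : ℕ, ∀ x ∈ ℛ n, Coalgebra.comul (R := k) x ∈
        ⨆ p ∈ Finset.HasAntidiagonal.antidiagonal n,
          LinearMap.range (TensorProduct.map (ℛ p.1).subtype (ℛ p.2).subtype))
    (hcounit : ∀ n : ℕ, 1 ≤ n → ∀ x ∈ ℛ n, Coalgebra.counit (R := k) x = 0)
    (hker : ∀ y : R, π y = 0 →
        y ∈ Submodule.span k {z : R | π z = 0 ∧ ∃ n : ℕ, z ∈ ℛ n})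
    (x : R) (hxker : π x = 0) (m : ℕ) (hm : 2 ≤ m) (hxmem : x ∈ ℛ m) (hx0 : x ≠ 0)
    (hmin : ∀ n : ℕ, n < m → ∀ y ∈ ℛ n, π y = 0 → y = 0) :
    Coalgebra.comul (R := k) x = x ⊗ₜ[k] 1 + 1 ⊗ₜ[k] x :=
  minimal_degree_kernel_element_is_primitive_general π ℛ hinternal hzero hcomul hcounit hker x hxker
    m hm hxmem hmin
end

section
/- Suppose q is a primitive N-th root of unity in k for some N ≥ 1 (i.e. q^N = 1 and q^s ≠ 1 for 1 ≤ s < N), and suppose x^N = 0. Then y_N = 0. (In particular, in a braided vector space of diagonal type, if x_i^N = 0 and q_{ii} has order N, then (ad_c x_i)^N(x_j) = 0 for every j.) -/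
/-!
Write `L` and `R` for left and right multiplication by `x` on `A`; they commute, and
`y_m = (L - q^{m-1} λ R) ⋯ (L - λ R) y`. For a primitive `N`-th root of unity `q` the
commuting factorization `∏_{j<N} (a - q^j b) = a^N - b^N` gives
`y_N = (L^N - λ^N R^N) y = x^N y - λ^N y x^N`, which vanishes when `x^N = 0`.
-/

/-- The `m`-fold iterated `q`-twisted adjoint action of `x` on `y`:
`y_0 = y`, `y_{m+1} = x·y_m − q^m·λ·y_m·x`. -/
def qTwistedAd {k A : Type*} [Field k] [Ring A] [Algebra k A]
    (x y : A) (q lam : k) : ℕ → A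
  | 0 => y
  | m + 1 => x * qTwistedAd x y q lam m - (q ^ m * lam) • (qTwistedAd x y q lam m * x)

open Finset Polynomial
open scoped IsMulCommutative

theorem IsPrimitiveRoot.pow_sub_pow_eq_prod_sub_smul {k R : Type*} [CommRing k] [IsDomain k]
    [CommRing R] [Algebra k R] {q : k} {N : ℕ} (hq : IsPrimitiveRoot q N) (hN : 0 < N)
    (a b : R) : a ^ N - b ^ N = ∏ j ∈ range N, (a - q ^ j • b) := by
  -- proved in the domain `k[Y][X]`, where the `q^j • Y` are the `N` distinct roots, then specialised
  have key : (X : k[X][X]) ^ N - C (X ^ N) = ∏ j ∈ range N, (X - C (C q ^ j * X)) :=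
    X_pow_sub_C_eq_prod (hq.map_of_injective C_injective) hN rfl
  have := congrArg (eval₂RingHom (aeval b).toRingHom a) key
  simpa [map_prod, eval₂_pow, Algebra.smul_def] using this

theorem qTwistedAd_eq_prod_apply {k A R : Type*} [Field k] [Ring A] [Algebra k A] [CommRing R]
    [Algebra k R] (x y : A) (q lam : k) (φ : R →ₐ[k] Module.End k A) (a b : R)
    (ha : φ a = LinearMap.mulLeft k x) (hb : φ b = lam • LinearMap.mulRight k x) (m : ℕ) :
    qTwistedAd x y q lam m = φ (∏ j ∈ range m, (a - q ^ j • b)) y := by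
  induction m with
  | zero => simp [qTwistedAd]
  | succ m ih =>
    rw [prod_range_succ, mul_comm, map_mul, Module.End.mul_apply, ← ih, qTwistedAd]
    simp [ha, hb, smul_smul]

theorem qTwistedAd_eq_of_isPrimitiveRoot {k A : Type*} [Field k] [Ring A] [Algebra k A]
    (x y : A) {q : k} (lam : k) {N : ℕ} (hq : IsPrimitiveRoot q N) (hN : 0 < N) :
    qTwistedAd x y q lam N = x ^ N * y - lam ^ N • (y * x ^ N) := by
  set L := LinearMap.mulLeft k x
  set B := lam • LinearMap.mulRight k x
  have hLB : Commute L B := (LinearMap.commute_mulLeft_right x x).smul_right _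
  let S := Algebra.adjoin k {L, B}
  have : IsMulCommutative S := Algebra.isMulCommutative_adjoin k (by
    simp only [Set.mem_insert_iff, Set.mem_singleton_iff]
    rintro _ (rfl | rfl) _ (rfl | rfl)
    exacts [rfl, hLB.eq, hLB.eq.symm, rfl])
  let a : S := ⟨L, Algebra.subset_adjoin (by simp)⟩
  let b : S := ⟨B, Algebra.subset_adjoin (by simp)⟩
  rw [qTwistedAd_eq_prod_apply x y q lam S.val a b rfl rfl,
    ← hq.pow_sub_pow_eq_prod_sub_smul hN a b]
  simp [a, b, L, B, _root_.smul_pow, LinearMap.pow_mulLeft, LinearMap.pow_mulRight]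

/-- If `q` is a primitive `N`-th root of unity and `x^N = 0`, then `y_N = 0`.
(In a braided vector space of diagonal type: if `x_i^N = 0` and `q_{ii}` has order `N`,
then `(ad_c x_i)^N (x_j) = 0`.) -/
theorem qTwistedAd_root_of_unity {k A : Type*} [Field k] [Ring A] [Algebra k A]
    (x y : A) (q lam : kˣ) (N : ℕ) (hN : 1 ≤ N)
    (hqN : (q : k) ^ N = 1) (hprim : ∀ s : ℕ, 1 ≤ s → s < N → (q : k) ^ s ≠ 1)
    (hx : x ^ N = 0) :
    qTwistedAd x y (q : k) (lam : k) N = 0 := by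
  rw [qTwistedAd_eq_of_isPrimitiveRoot x y _ (.mk_of_lt _ hN hqN hprim) hN, hx]
  simp
end

section
/- (Decomposition of positive roots.) Given a Cartan scheme with a finite root system (Δ^X)_{X∈𝔛}, for every X ∈ 𝔛 and every positive root α ∈ Δ^X_+ which is not a simple root (i.e. α ∉ {α_i : i ∈ I}), there exist positive roots β, γ ∈ Δ^X_+ such that α = β + γ. -/
/-- The reflection `s_i^X : ℤ^I → ℤ^I` of a Cartan scheme with Cartan matrices `A`,
determined by `s_i^X(α_j) = α_j − a^X_{ij}·α_i`. -/
def cartanRefl {I X : Type*} [Fintype I] [DecidableEq I]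
    (A : X → I → I → ℤ) (i : I) (x : X) (v : I → ℤ) : I → ℤ :=
  v - (∑ j, A x i j * v j) • Pi.single i 1

/-!
Write a positive root `α` of `x` as `w γ`, where `w` is a composite of simple reflections carrying
the roots of some object `y` onto those of `x`, and `γ` is a positive root of `y` supported on two
simple roots `α_i, α_j` (to start, `α` is the image of a simple root). If `w α_k` is negative for
some `k` in the support of `γ` (for any `k`, if `γ` is simple), replacing `w` by `w ∘ s_k` and `γ`
by `s_k γ` removes one inversion of `w`; so for a `w` with fewest inversions, `w α_i` and `w α_j`
are positive and it suffices to split `γ` in rank two.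

In rank two, the roots `s_i s_j s_i ⋯ (α_i or α_j)` have consecutive `2 × 2` determinants equal
to one. As long as they stay positive they turn monotonically, so by finiteness they leave the
positive quadrant, and every positive root of the plane is met before that, `α_j` included. The
positive roots from `α_i` to `α_j` thus form a unimodular chain in the quadrant, i.e. a Farey
sequence, in which every interior member is the sum of two others (its Stern–Brocot parents).
-/

theorem Nat.exists_le_lt_and_not_succ {P : ℕ → Prop} {a b : ℕ} (hab : a ≤ b) (ha : P a)
    (hb : ¬ P b) : ∃ m, a ≤ m ∧ m < b ∧ P m ∧ ¬ P (m + 1) := by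
  induction b, hab using Nat.le_induction with
  | base => exact absurd ha hb
  | succ b hab ih =>
    by_cases hPb : P b
    · exact ⟨b, hab, b.lt_succ_self, hPb, hb⟩
    · obtain ⟨m, ham, hmb, hm⟩ := ih hPb
      exact ⟨m, ham, hmb.trans b.lt_succ_self, hm⟩

section Farey

def det2 (p q : ℤ × ℤ) : ℤ := p.1 * q.2 - p.2 * q.1

@[simp] theorem det2_self (p : ℤ × ℤ) : det2 p p = 0 := by
  unfold det2; ring

theorem det2_add_left (p q u : ℤ × ℤ) : det2 (p + q) u = det2 p u + det2 q u := by
  simp only [det2, Prod.fst_add, Prod.snd_add]; ring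

theorem det2_add_right (p q u : ℤ × ℤ) : det2 u (p + q) = det2 u p + det2 u q := by
  simp only [det2, Prod.fst_add, Prod.snd_add]; ring

/-- Cramer's rule. -/
theorem det2_smul_eq (p q u : ℤ × ℤ) : det2 p q • u = det2 u q • p + det2 p u • q := by
  ext <;> simp only [det2, Prod.smul_fst, Prod.smul_snd, Prod.fst_add, Prod.snd_add,
    smul_eq_mul] <;> ring

theorem det2_pos_trans {p q u : ℤ × ℤ} (hp : 0 ≤ p) (hq : 0 ≤ q) (hu : 0 ≤ u)
    (hpq : 0 < det2 p q) (hqu : 0 < det2 q u) : 0 < det2 p u := by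
  have h := det2_smul_eq p u q
  rw [Prod.ext_iff] at h
  simp only [Prod.smul_fst, Prod.smul_snd, Prod.fst_add, Prod.snd_add, smul_eq_mul] at h
  rw [Prod.le_def] at hp hq hu
  simp only [Prod.fst_zero, Prod.snd_zero] at hp hq hu
  have hp0 : 0 < p.1 ∨ 0 < p.2 := by
    by_contra! h0
    have : p.1 = 0 ∧ p.2 = 0 := ⟨by omega, by omega⟩
    simp [det2, this.1, this.2] at hpq
  by_contra! hle
  rcases hp0 with h0 | h0 <;> nlinarith

variable {θ : ℕ → ℤ × ℤ} {M : ℕ} (hpos : ∀ n ≤ M, 0 ≤ θ n)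
  (hstep : ∀ n < M, det2 (θ n) (θ (n + 1)) = 1)
include hpos hstep

theorem det2_pos_of_lt {m n : ℕ} (hmn : m < n) (hnM : n ≤ M) : 0 < det2 (θ m) (θ n) := by
  induction n, hmn using Nat.le_induction with
  | base => rw [hstep m (by omega)]; exact one_pos
  | succ n hmn ih =>
    exact det2_pos_trans (hpos m (by omega)) (hpos n (by omega)) (hpos (n + 1) hnM)
      (ih (by omega)) (by rw [hstep n (by omega)]; exact one_pos)

theorem exists_eq_add_of_det2_eq_one {a b : ℕ} (hab : a + 2 ≤ b) (hbM : b ≤ M)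
    (hdet : det2 (θ a) (θ b) = 1) : ∃ e, a < e ∧ e < b ∧ θ e = θ a + θ b := by
  have hlt : ∀ {m n}, m < n → n ≤ M → 0 < det2 (θ m) (θ n) := det2_pos_of_lt hpos hstep
  -- In the basis `θ a, θ b`, take the first member whose `θ b`-coordinate is at least its
  -- `θ a`-coordinate; the Plücker relation with its predecessor forces both coordinates to be `1`.
  obtain ⟨e, hae, heb, hbefore, hafter⟩ := Nat.exists_le_lt_and_not_succ (by omega : a ≤ b)
    (P := fun n => det2 (θ a) (θ n) < det2 (θ n) (θ b)) (by simp [hdet]) (by simp [hdet])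
  simp only [not_lt] at hafter
  have hplucker : det2 (θ e) (θ (e + 1)) * det2 (θ a) (θ b) =
      det2 (θ e) (θ b) * det2 (θ a) (θ (e + 1)) - det2 (θ a) (θ e) * det2 (θ (e + 1)) (θ b) := by
    simp only [det2]; ring
  rw [hstep e (by omega), hdet] at hplucker
  have hae' : 0 ≤ det2 (θ a) (θ e) := by
    rcases hae.eq_or_lt with rfl | h
    · simp
    · exact (hlt h (by omega)).le
  have heb' : e + 1 < b := by
    by_contra! hb
    obtain rfl : e + 1 = b := by omega
    have : det2 (θ a) (θ e) = 0 := by simp at hplucker; nlinarith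
    rcases hae.eq_or_lt with rfl | h
    · omega
    · exact absurd this (hlt h (by omega)).ne'
  have ha1 : det2 (θ a) (θ (e + 1)) = 1 := by
    have := hlt (show a < e + 1 by omega) (by omega)
    nlinarith [hlt heb' hbM]
  have hb1 : det2 (θ (e + 1)) (θ b) = 1 := by
    have := hlt heb' hbM
    nlinarith [hlt (show a < e + 1 by omega) (by omega)]
  refine ⟨e + 1, by omega, heb', ?_⟩
  simpa [hdet, ha1, hb1] using det2_smul_eq (θ a) (θ b) (θ (e + 1))

/-- Farey (Stern–Brocot) splitting, by induction on `b - a` through the mediant. -/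
theorem exists_eq_add_of_det2_eq_one_of_lt {a b k : ℕ} (hak : a < k) (hkb : k < b) (hbM : b ≤ M)
    (hdet : det2 (θ a) (θ b) = 1) : ∃ s t, s ≤ M ∧ t ≤ M ∧ θ k = θ s + θ t := by
  induction hd : b - a using Nat.strong_induction_on generalizing a b with
  | _ d ih =>
    obtain ⟨e, hae, heb, he⟩ := exists_eq_add_of_det2_eq_one hpos hstep (by omega) hbM hdet
    rcases lt_trichotomy k e with hke | rfl | hke
    · exact ih (e - a) (by omega) hak hke (by omega)
        (by rw [he, det2_add_right, det2_self, zero_add, hdet]) rfl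
    · exact ⟨a, b, by omega, hbM, he⟩
    · exact ih (b - e) (by omega) hke hkb hbM
        (by rw [he, det2_add_left, det2_self, add_zero, hdet]) rfl

end Farey

section Lattice

variable {I : Type*}

theorem eq_of_support_subset_pair {i j : I} {u v : I → ℤ} (hu : Function.support u ⊆ {i, j})
    (hv : Function.support v ⊆ {i, j}) (hi : u i = v i) (hj : u j = v j) : u = v := by
  funext k
  by_cases hk : k = i ∨ k = j
  · rcases hk with rfl | rfl <;> assumption
  · have hk' : k ∉ ({i, j} : Set I) := by simpa using hk
    rw [Function.support_subset_iff'.mp hu k hk', Function.support_subset_iff'.mp hv k hk']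

variable [Fintype I] [DecidableEq I]

theorem AddMonoidHom.apply_eq_sum_smul_single (f : (I → ℤ) →+ (I → ℤ)) (v : I → ℤ) :
    f v = ∑ k, v k • f (Pi.single k 1) := by
  conv_lhs => rw [← Finset.univ_sum_single v]
  simp only [map_sum, ← map_zsmul, ← Pi.single_smul', smul_eq_mul, mul_one]

theorem AddMonoidHom.nonneg_apply_of_nonneg (f : (I → ℤ) →+ (I → ℤ)) {v : I → ℤ} (hv : 0 ≤ v)
    (hf : ∀ k, v k ≠ 0 → 0 ≤ f (Pi.single k 1)) : 0 ≤ f v := by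
  rw [f.apply_eq_sum_smul_single]
  refine Finset.sum_nonneg fun k _ => ?_
  by_cases hk : v k = 0
  · simp [hk]
  · exact smul_nonneg (hv k) (hf k hk)

theorem exists_eq_single_of_sum_le_one {v : I → ℤ} (hv : 0 ≤ v) (hv0 : v ≠ 0)
    (h : ∑ k, v k ≤ 1) : ∃ k, v = Pi.single k 1 := by
  obtain ⟨k, hk⟩ := Function.ne_iff.mp hv0
  have hsplit := Finset.add_sum_erase Finset.univ v (Finset.mem_univ k)
  have hrest := Finset.sum_nonneg fun l (_ : l ∈ Finset.univ.erase k) => hv l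
  have hvk : v k = 1 := by
    have := hv k
    simp only [Pi.zero_apply] at hk this
    omega
  have hzero : ∑ l ∈ Finset.univ.erase k, v l = 0 := by omega
  refine ⟨k, funext fun l => ?_⟩
  rcases eq_or_ne l k with rfl | hlk
  · simpa using hvk
  · rw [Pi.single_eq_of_ne hlk]
    exact (Finset.sum_eq_zero_iff_of_nonneg fun l _ => hv l).mp hzero l
      (Finset.mem_erase.mpr ⟨hlk, Finset.mem_univ l⟩)

/-- `f` does not lower heights (sums of coordinates), and a simple root has height one. -/
theorem exists_eq_single_of_apply_eq_single (f : (I → ℤ) →+ (I → ℤ))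
    (hf : ∀ k, 0 ≤ f (Pi.single k 1)) (hf0 : ∀ k, f (Pi.single k 1) ≠ 0) {v : I → ℤ}
    (hv : 0 ≤ v) {t : I} (h : f v = Pi.single t 1) : ∃ k, v = Pi.single k 1 := by
  refine exists_eq_single_of_sum_le_one hv (fun hv0 => by simpa [hv0] using congrFun h t) ?_
  have hheight : ∀ k, 1 ≤ ∑ l, f (Pi.single k 1) l := fun k =>
    Finset.sum_pos' (fun l _ => hf k l) (by
      obtain ⟨l, hl⟩ := Function.ne_iff.mp (hf0 k)
      exact ⟨l, Finset.mem_univ l, lt_of_le_of_ne (hf k l) (Ne.symm hl)⟩)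
  calc ∑ k, v k ≤ ∑ k, v k * ∑ l, f (Pi.single k 1) l :=
        Finset.sum_le_sum fun k _ => le_mul_of_one_le_right (hv k) (hheight k)
    _ = ∑ l, f v l := by
        simp only [f.apply_eq_sum_smul_single v, Finset.sum_apply, Pi.smul_apply, smul_eq_mul,
          Finset.mul_sum]
        exact Finset.sum_comm
    _ = 1 := by simp [h]

end Lattice

section CartanRefl

variable {I X : Type*} [Fintype I] [DecidableEq I] {A : X → I → I → ℤ} {i : I} {x : X}

theorem cartanRefl_apply_of_ne {k : I} (hk : k ≠ i) (v : I → ℤ) :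
    cartanRefl A i x v k = v k := by
  simp [cartanRefl, Pi.single_eq_of_ne hk]

theorem support_cartanRefl_subset (v : I → ℤ) :
    Function.support (cartanRefl A i x v) ⊆ insert i (Function.support v) := by
  intro k hk
  by_cases hki : k = i
  · exact Or.inl hki
  · exact Or.inr (by rwa [Function.mem_support, cartanRefl_apply_of_ne hki] at hk)

theorem cartanRefl_add (u v : I → ℤ) :
    cartanRefl A i x (u + v) = cartanRefl A i x u + cartanRefl A i x v := by
  simp only [cartanRefl, Pi.add_apply, mul_add, Finset.sum_add_distrib, add_smul]
  abel

def cartanReflHom (A : X → I → I → ℤ) (i : I) (x : X) : (I → ℤ) →+ (I → ℤ) where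
  toFun := cartanRefl A i x
  map_zero' := by simp [cartanRefl]
  map_add' := cartanRefl_add

theorem cartanRefl_single (j : I) :
    cartanRefl A i x (Pi.single j 1) = Pi.single j 1 - A x i j • Pi.single i 1 := by
  simp [cartanRefl, Pi.single_apply]

variable (h : A x i i = 2)
include h

theorem cartanRefl_single_self : cartanRefl A i x (Pi.single i 1) = -Pi.single i 1 := by
  rw [cartanRefl_single, h]
  module

theorem cartanRefl_cartanRefl (v : I → ℤ) : cartanRefl A i x (cartanRefl A i x v) = v := by
  set c := ∑ j, A x i j * v j
  calc cartanRefl A i x (cartanRefl A i x v)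
      = cartanReflHom A i x (v - c • Pi.single i 1) := rfl
    _ = cartanRefl A i x v - c • cartanRefl A i x (Pi.single i 1) := by
        rw [map_sub, map_zsmul]; rfl
    _ = v := by rw [cartanRefl_single_self h, cartanRefl]; module

def cartanReflEquiv : (I → ℤ) ≃+ (I → ℤ) :=
  AddEquiv.mk' ⟨cartanRefl A i x, cartanRefl A i x, cartanRefl_cartanRefl h,
    cartanRefl_cartanRefl h⟩ cartanRefl_add

@[simp] theorem coe_cartanReflEquiv : ⇑(cartanReflEquiv h) = cartanRefl A i x := rfl

end CartanRefl

section Roots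

variable {I X : Type*} {Δ : X → Set (I → ℤ)}
  (hposneg : ∀ x, Δ x = (Δ x ∩ {v | ∀ i, 0 ≤ v i}) ∪ (-(Δ x ∩ {v | ∀ i, 0 ≤ v i})))

include hposneg in
theorem nonneg_or_nonpos_of_mem {x : X} {v : I → ℤ} (hv : v ∈ Δ x) : 0 ≤ v ∨ v ≤ 0 := by
  rw [hposneg x] at hv
  rcases hv with ⟨-, hv⟩ | ⟨-, hv⟩
  · exact Or.inl hv
  · exact Or.inr fun k => by simpa using hv k

variable [DecidableEq I]
  (hsimple : ∀ x i, Δ x ∩ {v | ∃ z : ℤ, v = z • Pi.single i 1} =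
    {Pi.single i 1, -Pi.single i 1})

include hsimple in
theorem single_mem (x : X) (i : I) : Pi.single i 1 ∈ Δ x := by
  have : Pi.single i 1 ∈ Δ x ∩ {v | ∃ z : ℤ, v = z • Pi.single i 1} := by
    rw [hsimple]; exact Set.mem_insert _ _
  exact this.1

include hsimple in
theorem eq_single_of_support_subset {x : X} {i : I} {v : I → ℤ} (hv : v ∈ Δ x) (h0 : 0 ≤ v)
    (hs : Function.support v ⊆ {i}) : v = Pi.single i 1 := by
  have hline : v ∈ Δ x ∩ {v | ∃ z : ℤ, v = z • Pi.single i 1} := by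
    refine ⟨hv, v i, funext fun k => ?_⟩
    rcases eq_or_ne k i with rfl | hk
    · simp
    · simp [Pi.single_eq_of_ne hk, Function.support_subset_iff'.mp hs k hk]
  rw [hsimple x i] at hline
  rcases hline with hline | hline
  · exact hline
  · exact absurd (h0 i) (by simp [Set.mem_singleton_iff.mp hline])

include hsimple in
theorem zero_not_mem [Nonempty I] (x : X) : (0 : I → ℤ) ∉ Δ x := fun h0 => by
  obtain ⟨i⟩ := ‹Nonempty I›
  simpa using congrFun (eq_single_of_support_subset hsimple h0 le_rfl (by simp) (i := i)) i

variable [Fintype I] {A : X → I → I → ℤ} {r : I → X → X}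
  (hA : ∀ x i, A x i i = 2)
  (hrefl : ∀ x i, cartanRefl A i x '' Δ x = Δ (r i x))

include hposneg hsimple in
theorem nonneg_cartanRefl_of_mem {i : I} {x y z : X} {v : I → ℤ} (hv : v ∈ Δ y)
    (hv' : cartanRefl A i x v ∈ Δ z) (h0 : 0 ≤ v) (hne : v ≠ Pi.single i 1) :
    0 ≤ cartanRefl A i x v := by
  refine (nonneg_or_nonpos_of_mem hposneg hv').resolve_right fun hneg => hne ?_
  refine eq_single_of_support_subset hsimple hv h0 <|
    Function.support_subset_iff'.mpr fun k hk => le_antisymm ?_ (h0 k)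
  simpa [cartanRefl_apply_of_ne hk] using hneg k

include hrefl in
theorem cartanRefl_mem {x : X} {i : I} {v : I → ℤ} (hv : v ∈ Δ x) :
    cartanRefl A i x v ∈ Δ (r i x) :=
  hrefl x i ▸ Set.mem_image_of_mem _ hv

include hA hrefl in
theorem image_cartanRefl_r (x : X) (i : I) : cartanRefl A i x '' Δ (r i x) = Δ x := by
  rw [← hrefl x i, Set.image_image]
  simp [cartanRefl_cartanRefl (hA x i)]

include hA hrefl in
theorem image_trans_cartanReflEquiv {x y : X} {w : (I → ℤ) ≃+ (I → ℤ)} (hw : ⇑w '' Δ y = Δ x)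
    (k : I) : ⇑((cartanReflEquiv (hA y k)).trans w) '' Δ (r k y) = Δ x := by
  rw [AddEquiv.coe_trans, Set.image_comp, coe_cartanReflEquiv, image_cartanRefl_r hA hrefl,
    hw]

end Roots

section Sweep

variable {I : Type*}

def alternating (i j : I) (n : ℕ) : I := if Even n then i else j

variable {i j : I}

theorem alternating_add_two (n : ℕ) : alternating i j (n + 2) = alternating i j n := by
  simp [alternating, Nat.even_add]

theorem alternating_mem (n : ℕ) : alternating i j n ∈ ({i, j} : Set I) := by
  unfold alternating; split_ifs <;> simp

theorem eq_alternating_or_eq_alternating_succ {k : I} (hk : k ∈ ({i, j} : Set I)) (n : ℕ) :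
    k = alternating i j n ∨ k = alternating i j (n + 1) := by
  rcases hk with rfl | rfl <;> rcases Nat.even_or_odd n with hn | hn <;>
    simp [alternating, hn, Nat.even_add_one, Nat.not_even_iff_odd]

variable {X : Type*} [Fintype I] [DecidableEq I] {A : X → I → I → ℤ} (r : I → X → X)
  (hA : ∀ x i, A x i i = 2)

def pathObj (y : X) (q : ℕ → I) : ℕ → X
  | 0 => y
  | n + 1 => r (q n) (pathObj y q n)

/-- `pathMap r hA y q n = s_{q 0} ∘ ⋯ ∘ s_{q (n-1)}`, each reflection taken at the object reached
so far, so that it carries the roots of `pathObj r y q n` onto those of `y`. -/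
def pathMap (y : X) (q : ℕ → I) : ℕ → (I → ℤ) ≃+ (I → ℤ)
  | 0 => AddEquiv.refl _
  | n + 1 => (cartanReflEquiv (hA (pathObj r y q n) (q n))).trans (pathMap y q n)

/-- The roots `s_i s_j s_i ⋯ (α_i or α_j)`, with `n` reflections, of the rank-two sweep of `y`
from `α_i` towards `α_j`. -/
def sweep (y : X) (i j : I) (n : ℕ) : I → ℤ :=
  pathMap r hA y (alternating i j) n (Pi.single (alternating i j n) 1)

variable {r hA} {y : X} {q : ℕ → I}

theorem pathMap_succ_apply (n : ℕ) (v : I → ℤ) :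
    pathMap r hA y q (n + 1) v = pathMap r hA y q n (cartanRefl A (q n) (pathObj r y q n) v) :=
  rfl

theorem pathMap_symm_succ_apply (n : ℕ) (v : I → ℤ) :
    (pathMap r hA y q (n + 1)).symm v =
      cartanRefl A (q n) (pathObj r y q n) ((pathMap r hA y q n).symm v) :=
  rfl

theorem image_pathMap {Δ : X → Set (I → ℤ)} (hrefl : ∀ x i, cartanRefl A i x '' Δ x = Δ (r i x))
    (n : ℕ) : ⇑(pathMap r hA y q n) '' Δ (pathObj r y q n) = Δ y := by
  induction n with
  | zero => simp [pathMap, pathObj]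
  | succ n ih => exact image_trans_cartanReflEquiv hA hrefl ih (q n)

theorem support_pathMap_subset (hq : ∀ n, q n ∈ ({i, j} : Set I)) (n : ℕ) {v : I → ℤ}
    (hv : Function.support v ⊆ {i, j}) : Function.support (pathMap r hA y q n v) ⊆ {i, j} := by
  induction n generalizing v with
  | zero => exact hv
  | succ n ih => exact ih ((support_cartanRefl_subset v).trans (Set.insert_subset (hq n) hv))

theorem support_pathMap_symm_subset (hq : ∀ n, q n ∈ ({i, j} : Set I)) (n : ℕ) {v : I → ℤ}
    (hv : Function.support v ⊆ {i, j}) :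
    Function.support ((pathMap r hA y q n).symm v) ⊆ {i, j} := by
  induction n with
  | zero => exact hv
  | succ n ih => exact (support_cartanRefl_subset _).trans (Set.insert_subset (hq n) ih)

theorem support_sweep_subset (n : ℕ) : Function.support (sweep r hA y i j n) ⊆ {i, j} :=
  support_pathMap_subset alternating_mem n <| by
    rw [Pi.support_single_of_ne one_ne_zero]
    exact Set.singleton_subset_iff.mpr (alternating_mem n)

theorem sweep_zero : sweep r hA y i j 0 = Pi.single i 1 := by
  simp [sweep, pathMap, alternating]

theorem sweep_one : sweep r hA y i j 1 = Pi.single j 1 - A y i j • Pi.single i 1 := by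
  simp [sweep, pathMap, pathObj, alternating, cartanRefl_single]

theorem pathMap_succ_single_alternating (n : ℕ) :
    pathMap r hA y (alternating i j) (n + 1) (Pi.single (alternating i j n) 1) =
      -sweep r hA y i j n := by
  rw [pathMap_succ_apply, cartanRefl_single_self (hA _ _), map_neg, sweep]

theorem sweep_add_two (n : ℕ) : sweep r hA y i j (n + 2) = -sweep r hA y i j n -
    A (pathObj r y (alternating i j) (n + 1)) (alternating i j (n + 1)) (alternating i j n) •
      sweep r hA y i j (n + 1) := by
  rw [sweep, pathMap_succ_apply, alternating_add_two, cartanRefl_single, map_sub, map_zsmul,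
    pathMap_succ_single_alternating]
  rfl

theorem det2_sweep (hij : i ≠ j) (n : ℕ) :
    det2 (sweep r hA y i j n i, sweep r hA y i j n j)
      (sweep r hA y i j (n + 1) i, sweep r hA y i j (n + 1) j) = 1 := by
  induction n with
  | zero => simp [det2, sweep_zero, sweep_one, hij, hij.symm]
  | succ n ih =>
    rw [sweep_add_two]
    simp only [det2, Pi.sub_apply, Pi.neg_apply, Pi.smul_apply, smul_eq_mul] at ih ⊢
    linear_combination ih

end Sweep

section Decomposition

variable {I X : Type*} [Fintype I] [DecidableEq I] {A : X → I → I → ℤ} {r : I → X → X}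
  {Δ : X → Set (I → ℤ)}
  (hA : ∀ x i, A x i i = 2)
  (hfin : ∀ x, (Δ x).Finite)
  (hposneg : ∀ x, Δ x = (Δ x ∩ {v | ∀ i, 0 ≤ v i}) ∪ (-(Δ x ∩ {v | ∀ i, 0 ≤ v i})))
  (hsimple : ∀ x i, Δ x ∩ {v | ∃ z : ℤ, v = z • Pi.single i 1} =
    {Pi.single i 1, -Pi.single i 1})
  (hrefl : ∀ x i, cartanRefl A i x '' Δ x = Δ (r i x))

include hA hfin hposneg hsimple hrefl in
/-- `s_k` maps the new set injectively into the old one minus `α_k`. -/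
theorem ncard_lt_of_trans_cartanReflEquiv (P : (I → ℤ) → Prop) {y : X}
    {w : (I → ℤ) ≃+ (I → ℤ)} {k : I} (hk : P (w (Pi.single k 1)))
    (hk' : ¬ P (-w (Pi.single k 1))) :
    {v | v ∈ Δ (r k y) ∧ 0 ≤ v ∧ P ((cartanReflEquiv (hA y k)).trans w v)}.ncard <
      {v | v ∈ Δ y ∧ 0 ≤ v ∧ P (w v)}.ncard := by
  have hfin' := (hfin y).subset fun v (hv : v ∈ Δ y ∧ 0 ≤ v ∧ P (w v)) => hv.1
  have hmaps : Set.MapsTo (cartanRefl A k y)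
      {v | v ∈ Δ (r k y) ∧ 0 ≤ v ∧ P ((cartanReflEquiv (hA y k)).trans w v)}
      ({v | v ∈ Δ y ∧ 0 ≤ v ∧ P (w v)} \ {Pi.single k 1}) := by
    rintro v ⟨hv, hv0, hPv⟩
    simp only [AddEquiv.coe_trans, Function.comp_apply, coe_cartanReflEquiv] at hPv
    have hne : v ≠ Pi.single k 1 := by
      rintro rfl
      rw [cartanRefl_single_self (hA y k), map_neg] at hPv
      exact hk' hPv
    have hsv : cartanRefl A k y v ∈ Δ y :=
      image_cartanRefl_r hA hrefl y k ▸ Set.mem_image_of_mem _ hv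
    refine ⟨⟨hsv, nonneg_cartanRefl_of_mem hposneg hsimple hv hsv hv0 hne, hPv⟩, fun hsv1 => ?_⟩
    have : v = -Pi.single k 1 := by
      rw [← cartanRefl_cartanRefl (hA y k) v, Set.mem_singleton_iff.mp hsv1,
        cartanRefl_single_self (hA y k)]
    simpa [this] using hv0 k
  calc _ = (cartanRefl A k y '' _).ncard :=
        (Set.ncard_image_of_injective _ (cartanReflEquiv (hA y k)).injective).symm
    _ ≤ _ := Set.ncard_le_ncard hmaps.image_subset hfin'.sdiff
    _ < _ := Set.ncard_sdiff_singleton_lt_of_mem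
        ⟨single_mem hsimple y k, Pi.single_nonneg.mpr zero_le_one, hk⟩ hfin'

include hA hfin hposneg hsimple hrefl in
/-- Induction on the number of positive roots that `w` keeps positive: some `w α_k` is positive,
and `w ∘ s_k` keeps one root fewer. -/
theorem exists_apply_single_eq [Nonempty I] {x y : X} {w : (I → ℤ) ≃+ (I → ℤ)}
    (hw : ⇑w '' Δ y = Δ x) {β : I → ℤ} (hβ : β ∈ Δ y) (hβ0 : 0 ≤ β) (hwβ : 0 ≤ w β) :
    ∃ (y' : X) (w' : (I → ℤ) ≃+ (I → ℤ)) (l : I),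
      ⇑w' '' Δ y' = Δ x ∧ w' (Pi.single l 1) = w β := by
  induction hn : {v | v ∈ Δ y ∧ 0 ≤ v ∧ 0 ≤ w v}.ncard using Nat.strong_induction_on
    generalizing y w β with
  | _ n ih =>
  by_cases hsimp : ∃ l, β = Pi.single l 1
  · obtain ⟨l, rfl⟩ := hsimp
    exact ⟨y, w, l, hw, rfl⟩
  simp only [not_exists] at hsimp
  obtain ⟨k, hk⟩ : ∃ k, 0 ≤ w (Pi.single k 1) := by
    by_contra! hneg
    have : 0 ≤ -w β := (-(w : (I → ℤ) →+ (I → ℤ))).nonneg_apply_of_nonneg hβ0 fun k _ => by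
      simpa using (nonneg_or_nonpos_of_mem hposneg
        (hw ▸ Set.mem_image_of_mem w (single_mem hsimple y k))).resolve_left (hneg k)
    have hzero : w β = 0 := le_antisymm (by simpa using this) hwβ
    exact zero_not_mem hsimple x (hzero ▸ hw ▸ Set.mem_image_of_mem w hβ)
  have hk' : ¬ 0 ≤ -w (Pi.single k 1) := fun hk' => by
    have : w (Pi.single k 1) = 0 := le_antisymm (by simpa using hk') hk
    simpa using congrFun (w.injective (this.trans (map_zero w).symm)) k
  have hsβ := cartanRefl_mem hrefl (i := k) hβ
  obtain ⟨y', w', l, hw', hl⟩ := ih _ (hn ▸ ncard_lt_of_trans_cartanReflEquiv hA hfin hposneg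
    hsimple hrefl (0 ≤ ·) hk hk') (image_trans_cartanReflEquiv hA hrefl hw k) hsβ
    (nonneg_cartanRefl_of_mem hposneg hsimple hβ hsβ hβ0 (hsimp k))
    (by simpa [cartanRefl_cartanRefl (hA y k)] using hwβ) rfl
  exact ⟨y', w', l, hw', by simpa [cartanRefl_cartanRefl (hA y k)] using hl⟩

include hposneg hsimple in
/-- Apply `exists_eq_single_of_apply_eq_single` to `w⁻¹`, which maps every `α_t` to a positive
root since `w` maps every positive root to a positive one. -/
theorem exists_apply_single_eq_single {x y : X} {w : (I → ℤ) ≃+ (I → ℤ)}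
    (hw : ⇑w '' Δ y = Δ x) (hpos : ∀ k, 0 ≤ w (Pi.single k 1)) (l : I) :
    ∃ t, w (Pi.single l 1) = Pi.single t 1 := by
  have hsymm : ∀ t, 0 ≤ w.symm (Pi.single t 1) := by
    intro t
    obtain ⟨v, hv, hvt⟩ := hw.symm ▸ single_mem hsimple x t
    rw [← hvt, w.symm_apply_apply]
    refine (nonneg_or_nonpos_of_mem hposneg hv).resolve_right fun hneg => ?_
    have := (w : (I → ℤ) →+ (I → ℤ)).nonneg_apply_of_nonneg (neg_nonneg.mpr hneg)
      fun k _ => hpos k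
    simpa [hvt] using this t
  exact exists_eq_single_of_apply_eq_single (w.symm : (I → ℤ) →+ (I → ℤ)) hsymm
    (fun t => by simp) (hpos l) (t := l) (by simp)

include hsimple hrefl in
theorem sweep_mem (y : X) (i j : I) (n : ℕ) : sweep r hA y i j n ∈ Δ y :=
  image_pathMap hrefl n ▸ Set.mem_image_of_mem _ (single_mem hsimple _ _)

include hfin hsimple hrefl in
/-- While the sweep stays positive, `det2_sweep` makes it turn monotonically, hence injective. -/
theorem exists_not_nonneg_sweep (y : X) {i j : I} (hij : i ≠ j) :
    ∃ n, ¬ 0 ≤ sweep r hA y i j (n + 1) := by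
  by_contra! hpos
  have hpos' : ∀ n, 0 ≤ sweep r hA y i j n := by
    rintro (_ | n)
    · simp [sweep_zero, Pi.single_nonneg]
    · exact hpos n
  set θ : ℕ → ℤ × ℤ := fun n => (sweep r hA y i j n i, sweep r hA y i j n j)
  have hinj : Function.Injective (sweep r hA y i j) := by
    intro m n hmn
    by_contra hne
    wlog hlt : m < n generalizing m n
    · exact this hmn.symm (Ne.symm hne) (by omega)
    have := det2_pos_of_lt (M := n) (θ := θ)
      (fun k _ => Prod.le_def.mpr ⟨hpos' k i, hpos' k j⟩) (fun k _ => det2_sweep hij k) hlt le_rfl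
    simp [θ, hmn] at this
  exact Set.infinite_of_injective_forall_mem hinj (sweep_mem hA hsimple hrefl y i j) (hfin y)

include hposneg hsimple hrefl in
/-- Pull `p` back along the sweep: the first reflection that makes it negative must be the one of
its own simple root. -/
theorem exists_eq_sweep {y : X} {i j : I} {M : ℕ} (hM : 0 ≤ sweep r hA y i j M)
    (hM' : ¬ 0 ≤ sweep r hA y i j (M + 1)) {p : I → ℤ} (hp : p ∈ Δ y) (hp0 : 0 ≤ p)
    (hps : Function.support p ⊆ {i, j}) : ∃ m ≤ M, p = sweep r hA y i j m := by
  set w := pathMap r hA y (alternating i j)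
  have hmem : ∀ n, (w n).symm p ∈ Δ (pathObj r y (alternating i j) n) := fun n => by
    obtain ⟨v, hv, hvp⟩ : p ∈ ⇑(w n) '' Δ (pathObj r y (alternating i j) n) :=
      (image_pathMap hrefl n).symm ▸ hp
    rwa [← hvp, AddEquiv.symm_apply_apply]
  -- `w (M + 1)` maps `α_i` and `α_j` to `-sweep M` and `sweep (M + 1)`, both nonpositive
  have hend : ¬ 0 ≤ (w (M + 1)).symm p := fun h0 => by
    have hneg : 0 ≤ -(w (M + 1)) ((w (M + 1)).symm p) :=
      (-(w (M + 1) : (I → ℤ) →+ (I → ℤ))).nonneg_apply_of_nonneg h0 fun k hk => by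
        rcases eq_alternating_or_eq_alternating_succ
          (support_pathMap_symm_subset alternating_mem (M + 1) hps hk) M with rfl | rfl
        · simpa [w, pathMap_succ_single_alternating] using hM
        · simpa [w, sweep] using ((nonneg_or_nonpos_of_mem hposneg
            (sweep_mem hA hsimple hrefl y i j (M + 1))).resolve_left hM')
    have hp0' : p = 0 := le_antisymm (by simpa using hneg) hp0
    have : Nonempty I := ⟨i⟩
    exact zero_not_mem hsimple y (hp0' ▸ hp)
  obtain ⟨m, -, hmM, hm, hm'⟩ := Nat.exists_le_lt_and_not_succ (Nat.zero_le (M + 1))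
    (P := fun n => 0 ≤ (w n).symm p) (by simpa [w, pathMap] using hp0) hend
  have hsingle : (w m).symm p = Pi.single (alternating i j m) 1 := by
    by_contra hne
    rw [pathMap_symm_succ_apply] at hm'
    exact hm' (nonneg_cartanRefl_of_mem hposneg hsimple (hmem m) (hmem (m + 1)) hm hne)
  exact ⟨m, by omega, by rw [sweep, ← hsingle, AddEquiv.apply_symm_apply]⟩

include hA hfin hposneg hsimple hrefl in
theorem exists_add_eq_of_support_subset_pair {y : X} {i j : I} (hij : i ≠ j) {γ : I → ℤ}
    (hγ : γ ∈ Δ y) (hγ0 : 0 ≤ γ) (hγs : Function.support γ ⊆ {i, j}) (hγi : γ i ≠ 0)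
    (hγj : γ j ≠ 0) :
    ∃ γ₁ γ₂, γ₁ ∈ Δ y ∧ 0 ≤ γ₁ ∧ Function.support γ₁ ⊆ {i, j} ∧
      γ₂ ∈ Δ y ∧ 0 ≤ γ₂ ∧ Function.support γ₂ ⊆ {i, j} ∧ γ = γ₁ + γ₂ := by
  classical
  set η := sweep r hA y i j
  set θ : ℕ → ℤ × ℤ := fun n => (η n i, η n j)
  have hstop := exists_not_nonneg_sweep hA hfin hsimple hrefl y hij
  set M := Nat.find hstop
  have hpos : ∀ n ≤ M, 0 ≤ η n := by
    rintro (_ | n) hn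
    · simp [η, sweep_zero, Pi.single_nonneg]
    · exact not_not.mp (Nat.find_min hstop (by omega))
  have hθ : ∀ n ≤ M, 0 ≤ θ n := fun n hn => Prod.le_def.mpr ⟨hpos n hn i, hpos n hn j⟩
  have hdet : ∀ n < M, det2 (θ n) (θ (n + 1)) = 1 := fun n _ => det2_sweep hij n
  obtain ⟨k, hkM, rfl⟩ := exists_eq_sweep hA hposneg hsimple hrefl (hpos M le_rfl)
    (Nat.find_spec hstop) hγ hγ0 hγs
  obtain ⟨m, hmM, hm⟩ := exists_eq_sweep hA hposneg hsimple hrefl (hpos M le_rfl)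
    (Nat.find_spec hstop) (single_mem hsimple y j) (Pi.single_nonneg.mpr zero_le_one)
    (by simp [Pi.support_single_of_ne])
  have hmi : η m i = 0 := by simp [η, ← hm, hij]
  have hmj : η m j = 1 := by simp [η, ← hm]
  have hk0 : 0 < k := Nat.pos_of_ne_zero fun hk => hγj (by simp [hk, sweep_zero, hij.symm])
  have hkm : k < m := by
    by_contra! hmk
    rcases hmk.eq_or_lt with rfl | hlt
    · exact hγi hmi
    · have hmk' := det2_pos_of_lt hθ hdet hlt hkM
      simp only [θ, det2, hmi, hmj] at hmk'
      linarith [show 0 ≤ η k i from hpos k hkM i]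
  have h0m : det2 (θ 0) (θ m) = 1 := by simp [θ, det2, hmi, hmj, η, sweep_zero, hij.symm]
  obtain ⟨s, t, hs, ht, hst⟩ := exists_eq_add_of_det2_eq_one_of_lt hθ hdet hk0 hkm hmM h0m
  refine ⟨η s, η t, sweep_mem hA hsimple hrefl y i j s, hpos s hs, support_sweep_subset s,
    sweep_mem hA hsimple hrefl y i j t, hpos t ht, support_sweep_subset t, ?_⟩
  refine eq_of_support_subset_pair hγs ((Function.support_add _ _).trans
    (Set.union_subset (support_sweep_subset s) (support_sweep_subset t))) ?_ ?_
  · simpa using congrArg Prod.fst hst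
  · simpa using congrArg Prod.snd hst

include hA hfin hposneg hsimple hrefl in
theorem exists_add_eq_of_nonneg_apply_single {x y : X} {w : (I → ℤ) ≃+ (I → ℤ)}
    (hw : ⇑w '' Δ y = Δ x) {γ : I → ℤ} (hγ : γ ∈ Δ y) (hγ0 : 0 ≤ γ) {i j : I}
    (hγs : Function.support γ ⊆ {i, j}) (hns : ∀ l, γ ≠ Pi.single l 1)
    (hpos : ∀ k, γ k ≠ 0 → 0 ≤ w (Pi.single k 1)) :
    ∃ β₁ β₂, β₁ ∈ Δ x ∧ 0 ≤ β₁ ∧ β₂ ∈ Δ x ∧ 0 ≤ β₂ ∧ w γ = β₁ + β₂ := by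
  have hnotline : ∀ a, ¬ Function.support γ ⊆ {a} := fun a hs =>
    hns a (eq_single_of_support_subset hsimple hγ hγ0 hs)
  have hij : i ≠ j := by rintro rfl; exact hnotline i (by simpa using hγs)
  have hγi : γ i ≠ 0 := fun h => hnotline j fun k hk => by
    rcases hγs hk with rfl | rfl
    exacts [absurd h hk, rfl]
  have hγj : γ j ≠ 0 := fun h => hnotline i fun k hk => by
    rcases hγs hk with rfl | rfl
    exacts [rfl, absurd h hk]
  obtain ⟨γ₁, γ₂, h₁, h₁0, h₁s, h₂, h₂0, h₂s, rfl⟩ :=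
    exists_add_eq_of_support_subset_pair hA hfin hposneg hsimple hrefl hij hγ hγ0 hγs hγi hγj
  have hwpos : ∀ v, Function.support v ⊆ {i, j} → 0 ≤ v → 0 ≤ w v := fun v hs h0 =>
    (w : (I → ℤ) →+ (I → ℤ)).nonneg_apply_of_nonneg h0 fun k hk => hpos k <| by
      rcases hs hk with rfl | rfl
      exacts [hγi, hγj]
  exact ⟨w γ₁, w γ₂, hw ▸ Set.mem_image_of_mem w h₁, hwpos γ₁ h₁s h₁0,
    hw ▸ Set.mem_image_of_mem w h₂, hwpos γ₂ h₂s h₂0, map_add w γ₁ γ₂⟩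

include hA hfin hposneg hsimple hrefl in
/-- Strong induction on the number of inversions of `w`; when some `w α_k` is negative with `k` in
the support of `γ` (or anywhere, if `γ` is simple), pass to `w ∘ s_k` and `s_k γ`. -/
theorem exists_add_eq_of_support_subset {x y : X} {w : (I → ℤ) ≃+ (I → ℤ)}
    (hw : ⇑w '' Δ y = Δ x) {γ : I → ℤ} (hγ : γ ∈ Δ y) (hγ0 : 0 ≤ γ) {i j : I}
    (hγs : Function.support γ ⊆ {i, j}) (hwγ : 0 ≤ w γ) (hns : ∀ t, w γ ≠ Pi.single t 1) :
    ∃ β₁ β₂, β₁ ∈ Δ x ∧ 0 ≤ β₁ ∧ β₂ ∈ Δ x ∧ 0 ≤ β₂ ∧ w γ = β₁ + β₂ := by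
  induction hn : {v | v ∈ Δ y ∧ 0 ≤ v ∧ ¬ 0 ≤ w v}.ncard using Nat.strong_induction_on
    generalizing y w γ i j with
  | _ n ih =>
  have descend : ∀ k a b, ¬ 0 ≤ w (Pi.single k 1) → γ ≠ Pi.single k 1 →
      Function.support (cartanRefl A k y γ) ⊆ {a, b} →
      ∃ β₁ β₂, β₁ ∈ Δ x ∧ 0 ≤ β₁ ∧ β₂ ∈ Δ x ∧ 0 ≤ β₂ ∧ w γ = β₁ + β₂ := by
    intro k a b hk hγk hs
    have hk' : ¬ ¬ 0 ≤ -w (Pi.single k 1) := fun h => h <| by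
      simpa using (nonneg_or_nonpos_of_mem hposneg
        (hw ▸ Set.mem_image_of_mem w (single_mem hsimple y k))).resolve_left hk
    have hsγ := cartanRefl_mem hrefl (i := k) hγ
    simpa [cartanRefl_cartanRefl (hA y k)] using ih _ (hn ▸ ncard_lt_of_trans_cartanReflEquiv hA
      hfin hposneg hsimple hrefl (¬ 0 ≤ ·) hk hk') (image_trans_cartanReflEquiv hA hrefl hw k) hsγ
      (nonneg_cartanRefl_of_mem hposneg hsimple hγ hsγ hγ0 hγk) hs
      (by simpa [cartanRefl_cartanRefl (hA y k)] using hwγ)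
      (by simpa [cartanRefl_cartanRefl (hA y k)] using hns) rfl
  by_cases hsimp : ∃ l, γ = Pi.single l 1
  · obtain ⟨l, rfl⟩ := hsimp
    obtain ⟨k, hk⟩ : ∃ k, ¬ 0 ≤ w (Pi.single k 1) := by
      by_contra! hpos
      obtain ⟨t, ht⟩ := exists_apply_single_eq_single hposneg hsimple hw hpos l
      exact hns t ht
    have hlk : l ≠ k := by rintro rfl; exact hk hwγ
    refine descend k k l hk (fun h => hlk (by simpa [Pi.single_apply] using congrFun h l)) ?_
    rw [← Pi.support_single_of_ne (one_ne_zero (α := ℤ)) (i := l)]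
    exact support_cartanRefl_subset _
  simp only [not_exists] at hsimp
  by_cases hneg : ∃ k, γ k ≠ 0 ∧ ¬ 0 ≤ w (Pi.single k 1)
  · obtain ⟨k, hk0, hk⟩ := hneg
    exact descend k i j hk (hsimp k)
      ((support_cartanRefl_subset γ).trans (Set.insert_subset (hγs hk0) hγs))
  push Not at hneg
  exact exists_add_eq_of_nonneg_apply_single hA hfin hposneg hsimple hrefl hw hγ hγ0 hγs hsimp hneg

end Decomposition

theorem positive_root_decomposition_general {I X : Type*} [Fintype I] [DecidableEq I]
    [Nonempty I]
    -- Cartan scheme data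
    (r : I → X → X) (A : X → I → I → ℤ)
    (hAdiag : ∀ x i, A x i i = 2)
    -- root system data
    (Δ : X → Set (I → ℤ))
    (hfin : ∀ x, (Δ x).Finite)
    (hposneg : ∀ x, Δ x = (Δ x ∩ {v | ∀ i, 0 ≤ v i}) ∪ (-(Δ x ∩ {v | ∀ i, 0 ≤ v i})))
    (hsimple : ∀ x i, Δ x ∩ {v | ∃ z : ℤ, v = z • Pi.single i 1} =
        {Pi.single i 1, -Pi.single i 1})
    (hrefl : ∀ x i, cartanRefl A i x '' Δ x = Δ (r i x)) :
    -- conclusion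
    ∀ x : X, ∀ α ∈ Δ x, (∀ i, 0 ≤ α i) → (∀ i, α ≠ Pi.single i 1) →
      ∃ β γ : I → ℤ, β ∈ Δ x ∧ (∀ i, 0 ≤ β i) ∧ γ ∈ Δ x ∧ (∀ i, 0 ≤ γ i) ∧ α = β + γ := by
  intro x α hα hα0 hns
  obtain ⟨y, w, l, hw, hwl⟩ := exists_apply_single_eq hAdiag hfin hposneg hsimple hrefl
    (x := x) (y := x) (w := AddEquiv.refl _) (by simp) hα hα0 hα0
  rw [AddEquiv.refl_apply] at hwl
  obtain ⟨β, γ, hβ, hβ0, hγ, hγ0, hsum⟩ := exists_add_eq_of_support_subset hAdiag hfin hposneg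
    hsimple hrefl hw (single_mem hsimple y l) (Pi.single_nonneg.mpr zero_le_one) (i := l) (j := l)
    (by simp [Pi.support_single_of_ne]) (hwl ▸ hα0) (hwl ▸ hns)
  exact ⟨β, γ, hβ, hβ0, hγ, hγ0, hwl ▸ hsum⟩

/-- **Decomposition of positive roots.**  In a Cartan scheme with a finite root system,
every positive root which is not simple is the sum of two positive roots. -/
theorem positive_root_decomposition {I X : Type*} [Fintype I] [DecidableEq I]
    [Nonempty I] [Nonempty X]
    -- Cartan scheme data
    (r : I → X → X) (A : X → I → I → ℤ)
    (hr : ∀ i x, r i (r i x) = x)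
    (hAdiag : ∀ x i, A x i i = 2)
    (hAoff : ∀ x i j, i ≠ j → A x i j ≤ 0)
    (hAzero : ∀ x i j, A x i j = 0 ↔ A x j i = 0)
    (hAr : ∀ x i j, A x i j = A (r i x) i j)
    -- root system data
    (Δ : X → Set (I → ℤ))
    (hfin : ∀ x, (Δ x).Finite)
    (hposneg : ∀ x, Δ x = (Δ x ∩ {v | ∀ i, 0 ≤ v i}) ∪ (-(Δ x ∩ {v | ∀ i, 0 ≤ v i})))
    (hsimple : ∀ x i, Δ x ∩ {v | ∃ z : ℤ, v = z • Pi.single i 1} =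
        {Pi.single i 1, -Pi.single i 1})
    (hrefl : ∀ x i, cartanRefl A i x '' Δ x = Δ (r i x))
    (hcard : ∀ x i j, i ≠ j →
        (r i ∘ r j)^[(Δ x ∩ {v | ∃ a b : ℕ,
          v = (a : ℤ) • Pi.single i 1 + (b : ℤ) • Pi.single j 1}).ncard] x = x) :
    -- conclusion
    ∀ x : X, ∀ α ∈ Δ x, (∀ i, 0 ≤ α i) → (∀ i, α ≠ Pi.single i 1) →
      ∃ β γ : I → ℤ, β ∈ Δ x ∧ (∀ i, 0 ≤ β i) ∧ γ ∈ Δ x ∧ (∀ i, 0 ≤ γ i) ∧ α = β + γ :=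
  positive_root_decomposition_general r A hAdiag Δ hfin hposneg hsimple hrefl
end

section
/- Given a Cartan scheme with a finite root system (Δ^X)_{X∈𝔛}, for every X ∈ 𝔛, every pair of distinct indices i ≠ j in I, and every k ∈ ℕ₀: the element k·α_i + α_j belongs to Δ^X if and only if 0 ≤ k ≤ −a^X_{ij}. Consequently, a^X_{ij} = −max{ k ∈ ℕ₀ : k·α_i + α_j ∈ Δ^X }. -/
/-!
Write the roots in `ℤα_i + ℤα_j` as pairs `(a, b)`. With `c = −a_ij`, the reflection `s_i` acts as
`(a, b) ↦ (c b − a, b)`, and `s_j` likewise with the coordinates exchanged. Order the positive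
roots of the plane by slope. Any two neighbours `w`, `v` satisfy `cross w v = 1`. If `w = α_i`,
then `v = c α_i + α_j`. Otherwise `s_i` maps the neighbours to neighbours in reverse order. After
exchanging the coordinates they are again neighbours in the same orientation, now with fewer
positive roots below the upper one. If `k α_i + α_j` were missing for some `0 < k < c`, the
nearest positive roots on either side of it would be neighbours with `cross` at least `2`.
-/

namespace CartanScheme

def cross (u v : ℤ × ℤ) : ℤ := u.1 * v.2 - u.2 * v.1

def refl₁ (c : ℤ) (v : ℤ × ℤ) : ℤ × ℤ := (c * v.2 - v.1, v.2)

lemma refl₁_refl₁ (c : ℤ) (v : ℤ × ℤ) : refl₁ c (refl₁ c v) = v := by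
  simp [refl₁]

lemma cross_swap (u v : ℤ × ℤ) : cross u.swap v.swap = -cross u v := by
  simp only [cross, Prod.fst_swap, Prod.snd_swap]; ring

lemma cross_anticomm (u v : ℤ × ℤ) : cross v u = -cross u v := by
  simp only [cross]; ring

lemma cross_swap_left (u v : ℤ × ℤ) : cross u.swap v = cross v.swap u := by
  simp only [cross, Prod.fst_swap, Prod.snd_swap]; ring

lemma cross_swap_right (u v : ℤ × ℤ) : cross u v.swap = cross v u.swap := by
  simp only [cross, Prod.fst_swap, Prod.snd_swap]; ring

lemma cross_refl₁_left (c : ℤ) (u v : ℤ × ℤ) : cross (refl₁ c u) v = -cross u (refl₁ c v) := by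
  simp only [cross, refl₁]; ring

lemma cross_refl₁ (c : ℤ) (u v : ℤ × ℤ) : cross (refl₁ c u) (refl₁ c v) = -cross u v := by
  rw [cross_refl₁_left, refl₁_refl₁]

lemma pos_of_cross_pos {u v : ℤ × ℤ} (hu : 0 ≤ u.1 ∧ 0 ≤ u.2) (hv : 0 ≤ v.1 ∧ 0 ≤ v.2)
    (h : 0 < cross u v) : 0 < u.1 ∧ 0 < v.2 := by
  have : 0 < u.1 * v.2 := by unfold cross at h; nlinarith [mul_nonneg hu.2 hv.1]
  exact (pos_and_pos_or_neg_and_neg_of_mul_pos this).resolve_right fun h' => by linarith [h'.1]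

/-- The positive roots of a Cartan scheme lying in `ℕ₀α_i + ℕ₀α_j`, written as coordinate pairs;
`c` and `d` stand for `−a_ij` and `−a_ji`, and `r₁`, `r₂` for `r_i`, `r_j`. -/
structure RankTwoRootData (X : Type*) where
  r₁ : X → X
  r₂ : X → X
  c : X → ℤ
  d : X → ℤ
  P : X → Set (ℤ × ℤ)
  finite : ∀ y, (P y).Finite
  nonneg : ∀ y v, v ∈ P y → 0 ≤ v.1 ∧ 0 ≤ v.2
  fst_axis : ∀ y a, (a, 0) ∈ P y ↔ a = 1
  snd_axis : ∀ y b, (0, b) ∈ P y ↔ b = 1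
  r₁_r₁ : ∀ y, r₁ (r₁ y) = y
  r₂_r₂ : ∀ y, r₂ (r₂ y) = y
  c_r₁ : ∀ y, c (r₁ y) = c y
  d_r₂ : ∀ y, d (r₂ y) = d y
  refl₁_mem : ∀ y v, v ∈ P y → 0 < v.2 → refl₁ (c y) v ∈ P (r₁ y)
  refl₂_mem : ∀ y v, v ∈ P y → 0 < v.1 → (v.1, d y * v.1 - v.2) ∈ P (r₂ y)

namespace RankTwoRootData

variable {X : Type*} (S : RankTwoRootData X)

def swap : RankTwoRootData X where
  r₁ := S.r₂
  r₂ := S.r₁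
  c := S.d
  d := S.c
  P y := Prod.swap ⁻¹' S.P y
  finite y := (S.finite y).preimage Prod.swap_injective.injOn
  nonneg y _ hv := (S.nonneg y _ hv).symm
  fst_axis := S.snd_axis
  snd_axis := S.fst_axis
  r₁_r₁ := S.r₂_r₂
  r₂_r₂ := S.r₁_r₁
  c_r₁ := S.d_r₂
  d_r₂ := S.c_r₁
  refl₁_mem y v := S.refl₂_mem y v.swap
  refl₂_mem y v := S.refl₁_mem y v.swap

def below (y : X) (v : ℤ × ℤ) : Set (ℤ × ℤ) := {w | w ∈ S.P y ∧ 0 < cross w v}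

structure Adjacent (y : X) (w v : ℤ × ℤ) : Prop where
  left_mem : w ∈ S.P y
  right_mem : v ∈ S.P y
  cross_pos : 0 < cross w v
  not_between : ∀ u ∈ S.P y, 0 < cross w u → cross u v ≤ 0

variable {S} {y : X} {u v w : ℤ × ℤ}

lemma refl₁_mem_of_mem_r₁ (hv : v ∈ S.P (S.r₁ y)) (h : 0 < v.2) : refl₁ (S.c y) v ∈ S.P y := by
  simpa only [S.c_r₁, S.r₁_r₁] using S.refl₁_mem (S.r₁ y) v hv h

lemma c_one_mem : (S.c y, 1) ∈ S.P y := by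
  simpa [refl₁] using refl₁_mem_of_mem_r₁ ((S.snd_axis (S.r₁ y) 1).2 rfl) one_pos

lemma add_pos_of_mem (hv : v ∈ S.P y) : 0 < v.1 + v.2 := by
  obtain ⟨h₁, h₂⟩ := S.nonneg y v hv
  refine lt_of_le_of_ne (add_nonneg h₁ h₂) fun h => ?_
  have hv0 : v = (0, 0) := Prod.ext (by omega) (by omega)
  exact zero_ne_one ((S.fst_axis y 0).1 (hv0 ▸ hv))

lemma Adjacent.swap (h : S.Adjacent y w v) : S.swap.Adjacent y v.swap w.swap where
  left_mem := h.right_mem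
  right_mem := h.left_mem
  cross_pos := by rw [cross_swap, cross_anticomm, neg_neg]; exact h.cross_pos
  not_between u hu hvu := by
    rw [cross_swap_left] at hvu
    rw [cross_swap_right]
    by_contra hc
    exact (h.not_between u.swap hu (not_le.1 hc)).not_gt hvu

lemma Adjacent.reflect (h : S.Adjacent y w v) (hw : 0 < w.2) :
    S.Adjacent (S.r₁ y) (refl₁ (S.c y) v) (refl₁ (S.c y) w) := by
  have hv : 0 < v.2 :=
    (pos_of_cross_pos (S.nonneg y w h.left_mem) (S.nonneg y v h.right_mem) h.cross_pos).2
  refine ⟨S.refl₁_mem y v h.right_mem hv, S.refl₁_mem y w h.left_mem hw, ?_, fun u hu hvu => ?_⟩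
  · rw [cross_refl₁, ← cross_anticomm]; exact h.cross_pos
  · have hu₂ : 0 < u.2 :=
      (pos_of_cross_pos (S.nonneg _ _ (S.refl₁_mem y v h.right_mem hv)) (S.nonneg _ u hu) hvu).2
    rw [← refl₁_refl₁ (S.c y) u, cross_refl₁, ← cross_anticomm] at hvu ⊢
    by_contra hc
    exact (h.not_between _ (refl₁_mem_of_mem_r₁ hu hu₂) (not_le.1 hc)).not_gt hvu

lemma Adjacent.snd_eq_one (h : S.Adjacent y (1, 0) v) : v.2 = 1 := by
  have hv₂ : 0 < v.2 := by simpa [cross] using h.cross_pos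
  have hσv := S.refl₁_mem y v h.right_mem hv₂
  have hle : cross (S.c y, 1) v ≤ 0 := h.not_between _ c_one_mem (by simp [cross])
  have hge := (S.nonneg _ _ hσv).1
  have hσv_eq : refl₁ (S.c y) v = (0, v.2) := by
    simp only [cross, refl₁] at hle hge ⊢
    exact Prod.ext (by dsimp only; linarith) rfl
  exact (S.snd_axis _ _).1 (hσv_eq ▸ hσv)

lemma ncard_below_swap_refl₁_lt (hv : v ∈ S.P y) (hv₂ : 0 < v.2) :
    (S.swap.below (S.r₁ y) (refl₁ (S.c y) v).swap).ncard < (S.below y v).ncard := by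
  have hfin : (S.below y v).Finite := (S.finite y).subset fun _ hw => hw.1
  have hmem : ((1 : ℤ), (0 : ℤ)) ∈ S.below y v := ⟨(S.fst_axis y 1).2 rfl, by simpa [cross]⟩
  have hσv := S.nonneg _ _ (S.refl₁_mem y v hv hv₂)
  refine lt_of_le_of_lt (Set.ncard_le_ncard_of_injOn (fun u => refl₁ (S.c y) u.swap) ?_ ?_
    hfin.sdiff) (Set.ncard_sdiff_singleton_lt_of_mem hmem hfin)
  · rintro u ⟨hu, hcross⟩
    rw [cross_swap_right] at hcross
    have hu₂ : 0 < u.swap.2 := (pos_of_cross_pos hσv (S.nonneg _ _ hu) hcross).2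
    refine ⟨⟨refl₁_mem_of_mem_r₁ hu hu₂, ?_⟩, fun h => ?_⟩
    · rwa [cross_refl₁_left, ← cross_anticomm]
    · simp only [Set.mem_singleton_iff, Prod.ext_iff, refl₁] at h
      omega
  · exact ((Function.LeftInverse.injective (refl₁_refl₁ (S.c y))).comp Prod.swap_injective).injOn

theorem Adjacent.cross_eq_one {S : RankTwoRootData X} {y : X} {w v : ℤ × ℤ}
    (h : S.Adjacent y w v) : cross w v = 1 := by
  rcases (S.nonneg y w h.left_mem).2.eq_or_lt with hw | hw
  · obtain rfl : w = (1, 0) := Prod.ext ((S.fst_axis y w.1).1 (hw ▸ h.left_mem)) hw.symm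
    simpa [cross] using h.snd_eq_one
  · have := (h.reflect hw).swap.cross_eq_one
    rwa [cross_swap, cross_refl₁, neg_neg] at this
termination_by (S.below y v).ncard
decreasing_by
  exact ncard_below_swap_refl₁_lt h.right_mem
    (pos_of_cross_pos (S.nonneg y w h.left_mem) (S.nonneg y v h.right_mem) h.cross_pos).2

def slope (v : ℤ × ℤ) : ℚ := v.2 / (v.1 + v.2)

lemma slope_lt_slope (hu : u ∈ S.P y) (hv : v ∈ S.P y) (h : 0 < cross u v) :
    slope u < slope v := by
  have hu₀ : (0 : ℚ) < u.1 + u.2 := by exact_mod_cast add_pos_of_mem hu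
  have hv₀ : (0 : ℚ) < v.1 + v.2 := by exact_mod_cast add_pos_of_mem hv
  have h' : (0 : ℚ) < u.1 * v.2 - u.2 * v.1 := by exact_mod_cast h
  rw [slope, slope, div_lt_div_iff₀ hu₀ hv₀]
  linarith

theorem mk_one_mem_iff {k : ℤ} : (k, 1) ∈ S.P y ↔ 0 ≤ k ∧ k ≤ S.c y := by
  constructor
  · intro hk
    have := (S.nonneg _ _ (S.refl₁_mem y _ hk one_pos)).1
    simp only [refl₁, mul_one, sub_nonneg] at this
    exact ⟨(S.nonneg y _ hk).1, this⟩
  rintro ⟨hk₀, hkc⟩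
  rcases hkc.eq_or_lt with rfl | hkc
  · exact c_one_mem
  by_contra hx
  set x : ℤ × ℤ := (k, 1)
  obtain ⟨u, ⟨hu, hux⟩, hu_max⟩ := Set.exists_max_image {u | u ∈ S.P y ∧ 0 < cross u x} slope
    ((S.finite y).subset fun _ h => h.1) ⟨(S.c y, 1), c_one_mem, by simp [cross, x]; linarith⟩
  obtain ⟨w, ⟨hw, hxw⟩, hw_min⟩ := Set.exists_min_image {w | w ∈ S.P y ∧ 0 ≤ cross x w} slope
    ((S.finite y).subset fun _ h => h.1) ⟨(0, 1), (S.snd_axis y 1).2 rfl, by simpa [cross, x]⟩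
  have hu₂ : 0 < u.2 := by
    have : cross u (S.c y, 1) ≤ 0 := not_lt.1 fun h =>
      (hu_max _ ⟨c_one_mem, by simp [cross, x]; linarith⟩).not_gt (slope_lt_slope hu c_one_mem h)
    simp only [cross] at this
    nlinarith [add_pos_of_mem hu, S.nonneg y u hu]
  have hw₂ : 0 < w.2 := by
    simp only [cross, x] at hxw
    nlinarith [add_pos_of_mem hw, S.nonneg y w hw]
  have hsplit : cross u w = cross u x * w.2 + u.2 * cross x w := by simp only [cross, x]; ring
  have hadj : S.Adjacent y u w := by
    refine ⟨hu, hw, by nlinarith, fun z hz huz => ?_⟩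
    by_contra hzw
    rcases lt_or_ge 0 (cross z x) with hzx | hzx
    · exact (hu_max z ⟨hz, hzx⟩).not_gt (slope_lt_slope hu hz huz)
    · exact (hw_min z ⟨hz, by rw [cross_anticomm]; linarith⟩).not_gt
        (slope_lt_slope hz hw (not_le.1 hzw))
  have h₁ := hadj.cross_eq_one
  have hw₂_eq : w.2 = 1 := by nlinarith
  have hxw_eq : cross x w = 0 := by nlinarith
  apply hx
  convert hw
  simp only [cross, x] at hxw_eq
  exact Prod.ext (show k = w.1 by rw [hw₂_eq] at hxw_eq; linarith) hw₂_eq.symm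

end RankTwoRootData

variable {I X : Type*}

lemma nonneg_of_mem {Δ : Set (I → ℤ)}
    (hposneg : Δ = (Δ ∩ {v | ∀ i, 0 ≤ v i}) ∪ (-(Δ ∩ {v | ∀ i, 0 ≤ v i})))
    {v : I → ℤ} (hv : v ∈ Δ) {j : I} (hj : 0 < v j) (k : I) : 0 ≤ v k := by
  rw [hposneg] at hv
  rcases hv with hv | hv
  · exact hv.2 k
  · have := hv.2 j
    simp only [Pi.neg_apply, Int.neg_nonneg] at this
    omega

variable [DecidableEq I]

def pairVec (i j : I) (v : ℤ × ℤ) : I → ℤ := v.1 • Pi.single i 1 + v.2 • Pi.single j 1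

lemma pairVec_swap (i j : I) (v : ℤ × ℤ) : pairVec j i v.swap = pairVec i j v := add_comm _ _

lemma pairVec_apply_left {i j : I} (hij : i ≠ j) (v : ℤ × ℤ) : pairVec i j v i = v.1 := by
  simp [pairVec, Pi.single_eq_of_ne hij]

lemma pairVec_apply_right {i j : I} (hij : i ≠ j) (v : ℤ × ℤ) : pairVec i j v j = v.2 := by
  simp [pairVec, Pi.single_eq_of_ne hij.symm]

lemma pairVec_injective {i j : I} (hij : i ≠ j) : Function.Injective (pairVec i j) :=
  fun v w h => Prod.ext (by simpa [pairVec_apply_left hij] using congrFun h i)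
    (by simpa [pairVec_apply_right hij] using congrFun h j)

lemma cartanRefl_pairVec [Fintype I] {A : X → I → I → ℤ} {x : X} {i j : I}
    (hA : A x i i = 2) (v : ℤ × ℤ) :
    cartanRefl A i x (pairVec i j v) = pairVec i j (refl₁ (-A x i j) v) := by
  ext k
  simp only [cartanRefl, pairVec, refl₁, Pi.sub_apply, Pi.add_apply, Pi.smul_apply, smul_eq_mul,
    Pi.single_apply, mul_ite, mul_one, mul_zero, mul_add, Finset.sum_add_distrib,
    Finset.sum_ite_eq', Finset.mem_univ, if_true, hA]
  split_ifs <;> ring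

lemma smul_single_mem_iff {Δ : Set (I → ℤ)} {i : I}
    (hsimple : Δ ∩ {v | ∃ z : ℤ, v = z • Pi.single i 1} = {Pi.single i 1, -Pi.single i 1})
    (a : ℤ) : a • Pi.single i 1 ∈ Δ ↔ a = 1 ∨ a = -1 := by
  have hmem : a • Pi.single i 1 ∈ Δ ↔
      a • Pi.single i (1 : ℤ) ∈ ({Pi.single i 1, -Pi.single i 1} : Set (I → ℤ)) := by
    rw [← hsimple]
    exact ⟨fun h => ⟨h, a, rfl⟩, fun h => h.1⟩
  rw [hmem, ← Pi.single_neg, ← Pi.single_smul]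
  simp [Pi.single_inj]

lemma refl₁_mem_of_pairVec_mem [Fintype I] {r : I → X → X} {A : X → I → I → ℤ}
    {Δ : X → Set (I → ℤ)} {x : X} {i j : I} (hij : i ≠ j) (hA : A x i i = 2)
    (hrefl : cartanRefl A i x '' Δ x = Δ (r i x))
    (hposneg : Δ (r i x) =
      (Δ (r i x) ∩ {v | ∀ i, 0 ≤ v i}) ∪ (-(Δ (r i x) ∩ {v | ∀ i, 0 ≤ v i})))
    {v : ℤ × ℤ} (hv : pairVec i j v ∈ Δ x) (hv₂ : 0 < v.2) :
    0 ≤ (refl₁ (-A x i j) v).1 ∧ pairVec i j (refl₁ (-A x i j) v) ∈ Δ (r i x) := by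
  have hmem : pairVec i j (refl₁ (-A x i j) v) ∈ Δ (r i x) :=
    hrefl ▸ ⟨_, hv, cartanRefl_pairVec hA v⟩
  refine ⟨?_, hmem⟩
  have := nonneg_of_mem hposneg hmem (j := j) (by rwa [pairVec_apply_right hij]) i
  rwa [pairVec_apply_left hij] at this

def rankTwoRestriction [Fintype I] (r : I → X → X) (A : X → I → I → ℤ) (Δ : X → Set (I → ℤ))
    (hr : ∀ i x, r i (r i x) = x)
    (hAdiag : ∀ x i, A x i i = 2)
    (hAr : ∀ x i j, A x i j = A (r i x) i j)
    (hfin : ∀ x, (Δ x).Finite)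
    (hposneg : ∀ x, Δ x = (Δ x ∩ {v | ∀ i, 0 ≤ v i}) ∪ (-(Δ x ∩ {v | ∀ i, 0 ≤ v i})))
    (hsimple : ∀ x i, Δ x ∩ {v | ∃ z : ℤ, v = z • Pi.single i 1} =
        {Pi.single i 1, -Pi.single i 1})
    (hrefl : ∀ x i, cartanRefl A i x '' Δ x = Δ (r i x))
    {i j : I} (hij : i ≠ j) : RankTwoRootData X where
  r₁ := r i
  r₂ := r j
  c x := -A x i j
  d x := -A x j i
  P x := {v | 0 ≤ v.1 ∧ 0 ≤ v.2 ∧ pairVec i j v ∈ Δ x}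
  finite x := ((hfin x).preimage (pairVec_injective hij).injOn).subset fun _ hv => hv.2.2
  nonneg _ _ hv := ⟨hv.1, hv.2.1⟩
  fst_axis x a := by
    simp only [Set.mem_ofPred_eq, pairVec, zero_smul, add_zero, le_refl, true_and,
      smul_single_mem_iff (hsimple x i)]
    omega
  snd_axis x b := by
    simp only [Set.mem_ofPred_eq, pairVec, zero_smul, zero_add, le_refl, true_and,
      smul_single_mem_iff (hsimple x j)]
    omega
  r₁_r₁ := hr i
  r₂_r₂ := hr j
  c_r₁ x := by rw [← hAr]
  d_r₂ x := by rw [← hAr]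
  refl₁_mem x v hv hv₂ := by
    obtain ⟨h₁, hmem⟩ :=
      refl₁_mem_of_pairVec_mem hij (hAdiag x i) (hrefl x i) (hposneg _) hv.2.2 hv₂
    exact ⟨h₁, hv.2.1, hmem⟩
  refl₂_mem x v hv hv₁ := by
    have hv' : pairVec j i v.swap ∈ Δ x := (pairVec_swap i j v).symm ▸ hv.2.2
    obtain ⟨h₁, hmem⟩ :=
      refl₁_mem_of_pairVec_mem hij.symm (hAdiag x j) (hrefl x j) (hposneg _) hv' hv₁
    exact ⟨hv.1, h₁, by rwa [← pairVec_swap]⟩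

end CartanScheme

open CartanScheme in
theorem root_string_iff_cartan_entry_general {I X : Type*} [Fintype I] [DecidableEq I]
    -- Cartan scheme data
    (r : I → X → X) (A : X → I → I → ℤ)
    (hr : ∀ i x, r i (r i x) = x)
    (hAdiag : ∀ x i, A x i i = 2)
    (hAr : ∀ x i j, A x i j = A (r i x) i j)
    -- root system data
    (Δ : X → Set (I → ℤ))
    (hfin : ∀ x, (Δ x).Finite)
    (hposneg : ∀ x, Δ x = (Δ x ∩ {v | ∀ i, 0 ≤ v i}) ∪ (-(Δ x ∩ {v | ∀ i, 0 ≤ v i})))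
    (hsimple : ∀ x i, Δ x ∩ {v | ∃ z : ℤ, v = z • Pi.single i 1} =
        {Pi.single i 1, -Pi.single i 1})
    (hrefl : ∀ x i, cartanRefl A i x '' Δ x = Δ (r i x)) :
    -- conclusion
    ∀ (x : X) (i j : I), i ≠ j →
      (∀ n : ℕ, (n : ℤ) • Pi.single i 1 + Pi.single j 1 ∈ Δ x ↔ (n : ℤ) ≤ -A x i j) ∧
      IsGreatest {n : ℤ | 0 ≤ n ∧ n • Pi.single i 1 + Pi.single j 1 ∈ Δ x} (-A x i j) := by
  intro x i j hij
  let S := rankTwoRestriction r A Δ hr hAdiag hAr hfin hposneg hsimple hrefl hij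
  have hmem_iff : ∀ n : ℤ, 0 ≤ n → (n • Pi.single i 1 + Pi.single j 1 ∈ Δ x ↔ n ≤ -A x i j) :=
    fun n hn => by simpa [S, rankTwoRestriction, pairVec, hn] using S.mk_one_mem_iff (y := x) (k := n)
  have hc : 0 ≤ -A x i j := (S.nonneg x _ RankTwoRootData.c_one_mem).1
  exact ⟨fun n => hmem_iff n n.cast_nonneg, ⟨hc, (hmem_iff _ hc).2 le_rfl⟩,
    fun n hn => (hmem_iff n hn.1).1 hn.2⟩

/-- In a Cartan scheme with a finite root system: for `i ≠ j` and `k ∈ ℕ`,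
`k·α_i + α_j ∈ Δ^X` iff `k ≤ −a^X_{ij}`; consequently
`−a^X_{ij}` is the greatest `k ∈ ℕ₀` with `k·α_i + α_j ∈ Δ^X`. -/
theorem root_string_iff_cartan_entry {I X : Type*} [Fintype I] [DecidableEq I]
    [Nonempty I] [Nonempty X]
    -- Cartan scheme data
    (r : I → X → X) (A : X → I → I → ℤ)
    (hr : ∀ i x, r i (r i x) = x)
    (hAdiag : ∀ x i, A x i i = 2)
    (hAoff : ∀ x i j, i ≠ j → A x i j ≤ 0)
    (hAzero : ∀ x i j, A x i j = 0 ↔ A x j i = 0)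
    (hAr : ∀ x i j, A x i j = A (r i x) i j)
    -- root system data
    (Δ : X → Set (I → ℤ))
    (hfin : ∀ x, (Δ x).Finite)
    (hposneg : ∀ x, Δ x = (Δ x ∩ {v | ∀ i, 0 ≤ v i}) ∪ (-(Δ x ∩ {v | ∀ i, 0 ≤ v i})))
    (hsimple : ∀ x i, Δ x ∩ {v | ∃ z : ℤ, v = z • Pi.single i 1} =
        {Pi.single i 1, -Pi.single i 1})
    (hrefl : ∀ x i, cartanRefl A i x '' Δ x = Δ (r i x))
    (hcard : ∀ x i j, i ≠ j →
        (r i ∘ r j)^[(Δ x ∩ {v | ∃ a b : ℕ,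
          v = (a : ℤ) • Pi.single i 1 + (b : ℤ) • Pi.single j 1}).ncard] x = x) :
    -- conclusion
    ∀ (x : X) (i j : I), i ≠ j →
      (∀ n : ℕ, (n : ℤ) • Pi.single i 1 + Pi.single j 1 ∈ Δ x ↔ (n : ℤ) ≤ -A x i j) ∧
      IsGreatest {n : ℤ | 0 ≤ n ∧ n • Pi.single i 1 + Pi.single j 1 ∈ Δ x} (-A x i j) :=
  root_string_iff_cartan_entry_general r A hr hAdiag hAr Δ hfin hposneg hsimple hrefl
end

section
/- There exists a Hopf algebra structure over k on the algebra 𝒰(q) (i.e. a comultiplication Δ, counit ε and antipode making 𝒰(q) a Hopf algebra with its given algebra structure) such that Δ(K_i) = K_i ⊗ K_i, Δ(L_i) = L_i ⊗ L_i, Δ(E_i) = E_i ⊗ 1 + K_i ⊗ E_i, Δ(F_i) = F_i ⊗ L_i + 1 ⊗ F_i, ε(K_i) = ε(L_i) = 1, and ε(E_i) = ε(F_i) = 0 for all 1 ≤ i ≤ θ. -/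
/-- The generators `E_i, F_i, K_i, K_i⁻, L_i, L_i⁻` of the Drinfeld double `𝒰(q)`. -/
inductive UGen (θ : ℕ) : Type
  | E : Fin θ → UGen θ
  | F : Fin θ → UGen θ
  | K : Fin θ → UGen θ
  | Kinv : Fin θ → UGen θ
  | L : Fin θ → UGen θ
  | Linv : Fin θ → UGen θ

/-- The toral generators, i.e. those among `K_i, K_i⁻, L_i, L_i⁻`. -/
def UGen.IsToral {θ : ℕ} : UGen θ → Prop
  | .E _ => False
  | .F _ => False
  | _ => True

variable (k : Type*) [Field k] {θ : ℕ}

/-- The image of a generator in the free algebra. -/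
noncomputable def Ugen (g : UGen θ) : FreeAlgebra k (UGen θ) := FreeAlgebra.ι k g

/-- The defining relations of the algebra `𝒰(q)`. -/
inductive URel (q : Fin θ → Fin θ → kˣ) :
    FreeAlgebra k (UGen θ) → FreeAlgebra k (UGen θ) → Prop
  | toral_comm (X Y : UGen θ) (hX : X.IsToral) (hY : Y.IsToral) :
      URel q (Ugen k X * Ugen k Y) (Ugen k Y * Ugen k X)
  | K_Kinv (i : Fin θ) : URel q (Ugen k (.K i) * Ugen k (.Kinv i)) 1
  | Kinv_K (i : Fin θ) : URel q (Ugen k (.Kinv i) * Ugen k (.K i)) 1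
  | L_Linv (i : Fin θ) : URel q (Ugen k (.L i) * Ugen k (.Linv i)) 1
  | Linv_L (i : Fin θ) : URel q (Ugen k (.Linv i) * Ugen k (.L i)) 1
  | K_E (i j : Fin θ) : URel q (Ugen k (.K i) * Ugen k (.E j))
      ((q i j : k) • (Ugen k (.E j) * Ugen k (.K i)))
  | L_E (i j : Fin θ) : URel q (Ugen k (.L i) * Ugen k (.E j))
      ((q j i : k)⁻¹ • (Ugen k (.E j) * Ugen k (.L i)))
  | K_F (i j : Fin θ) : URel q (Ugen k (.K i) * Ugen k (.F j))
      ((q i j : k)⁻¹ • (Ugen k (.F j) * Ugen k (.K i)))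
  | L_F (i j : Fin θ) : URel q (Ugen k (.L i) * Ugen k (.F j))
      ((q j i : k) • (Ugen k (.F j) * Ugen k (.L i)))
  | E_F (i j : Fin θ) : URel q (Ugen k (.E i) * Ugen k (.F j) - Ugen k (.F j) * Ugen k (.E i))
      (if i = j then Ugen k (.K i) - Ugen k (.L i) else 0)

/-- The algebra `𝒰(q)`: the quotient of the free algebra on the generators
`E_i, F_i, K_i, K_i⁻, L_i, L_i⁻` by the defining relations. -/
noncomputable abbrev UqAlgebra (q : Fin θ → Fin θ → kˣ) := RingQuot (URel k q)

variable (q : Fin θ → Fin θ → kˣ)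

/-- The generator `E_i` of `𝒰(q)`. -/
noncomputable def UE (i : Fin θ) : UqAlgebra k q := RingQuot.mkAlgHom k (URel k q) (Ugen k (.E i))
/-- The generator `F_i` of `𝒰(q)`. -/
noncomputable def UF (i : Fin θ) : UqAlgebra k q := RingQuot.mkAlgHom k (URel k q) (Ugen k (.F i))
/-- The generator `K_i` of `𝒰(q)`. -/
noncomputable def UK (i : Fin θ) : UqAlgebra k q := RingQuot.mkAlgHom k (URel k q) (Ugen k (.K i))
/-- The generator `K_i⁻` of `𝒰(q)`. -/
noncomputable def UKinv (i : Fin θ) : UqAlgebra k q :=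
  RingQuot.mkAlgHom k (URel k q) (Ugen k (.Kinv i))
/-- The generator `L_i` of `𝒰(q)`. -/
noncomputable def UL (i : Fin θ) : UqAlgebra k q := RingQuot.mkAlgHom k (URel k q) (Ugen k (.L i))
/-- The generator `L_i⁻` of `𝒰(q)`. -/
noncomputable def ULinv (i : Fin θ) : UqAlgebra k q :=
  RingQuot.mkAlgHom k (URel k q) (Ugen k (.Linv i))

open scoped TensorProduct


/-!
`Δ`, `ε` and the antipode are defined on the generators and checked to respect the defining
relations; the antipode is built as an algebra map `𝒰(q) → 𝒰(q)ᵐᵒᵖ`, so it reverses products.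
Coassociativity and the counit axioms are equalities of algebra maps, so they only need to be
checked on generators. The antipode axioms `m ∘ (S ⊗ id) ∘ Δ = η ∘ ε` are not, but since `S`
reverses products the elements satisfying them form a subalgebra, and on the generators they
reduce to `S(K_i) = K_i⁻¹`, `S(L_i) = L_i⁻¹`, `S(E_i) = -K_i⁻¹E_i`, `S(F_i) = -F_iL_i⁻¹`.
-/

section HopfAxiomsOnGenerators

open TensorProduct MulOpposite

variable {R A : Type*} [CommSemiring R] [Semiring A] [Algebra R A]

theorem coassoc_of_adjoin_eq_top {s : Set A} (hs : Algebra.adjoin R s = ⊤)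
    (Δ : A →ₐ[R] A ⊗[R] A)
    (h : ∀ x ∈ s, TensorProduct.assoc R A A A (map Δ.toLinearMap LinearMap.id (Δ x)) =
      map LinearMap.id Δ.toLinearMap (Δ x)) :
    (TensorProduct.assoc R A A A).toLinearMap ∘ₗ map Δ.toLinearMap LinearMap.id ∘ₗ
        Δ.toLinearMap =
      map LinearMap.id Δ.toLinearMap ∘ₗ Δ.toLinearMap :=
  congrArg AlgHom.toLinearMap <| AlgHom.ext_of_adjoin_eq_top hs
    (φ₁ := (Algebra.TensorProduct.assoc R R R A A A).toAlgHom.comp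
      ((Algebra.TensorProduct.map Δ (.id R A)).comp Δ))
    (φ₂ := (Algebra.TensorProduct.map (.id R A) Δ).comp Δ) h

theorem lid_comp_counit_comul_of_adjoin_eq_top {s : Set A} (hs : Algebra.adjoin R s = ⊤)
    (Δ : A →ₐ[R] A ⊗[R] A) (ε : A →ₐ[R] R)
    (h : ∀ x ∈ s, TensorProduct.lid R A (map ε.toLinearMap LinearMap.id (Δ x)) = x) :
    (TensorProduct.lid R A).toLinearMap ∘ₗ map ε.toLinearMap LinearMap.id ∘ₗ Δ.toLinearMap =
      LinearMap.id :=
  congrArg AlgHom.toLinearMap <| AlgHom.ext_of_adjoin_eq_top hs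
    (φ₁ := (Algebra.TensorProduct.lid R A).toAlgHom.comp
      ((Algebra.TensorProduct.map ε (.id R A)).comp Δ))
    (φ₂ := .id R A) h

theorem rid_comp_counit_comul_of_adjoin_eq_top {s : Set A} (hs : Algebra.adjoin R s = ⊤)
    (Δ : A →ₐ[R] A ⊗[R] A) (ε : A →ₐ[R] R)
    (h : ∀ x ∈ s, TensorProduct.rid R A (map LinearMap.id ε.toLinearMap (Δ x)) = x) :
    (TensorProduct.rid R A).toLinearMap ∘ₗ map LinearMap.id ε.toLinearMap ∘ₗ Δ.toLinearMap =
      LinearMap.id :=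
  congrArg AlgHom.toLinearMap <| AlgHom.ext_of_adjoin_eq_top hs
    (φ₁ := (Algebra.TensorProduct.rid R R A).toAlgHom.comp
      ((Algebra.TensorProduct.map (.id R A) ε).comp Δ))
    (φ₂ := .id R A) h

def AlgHom.unopLinearMap (S : A →ₐ[R] Aᵐᵒᵖ) : A →ₗ[R] A :=
  (opLinearEquiv R).symm.toLinearMap ∘ₗ S.toLinearMap

@[simp] lemma AlgHom.unopLinearMap_apply (S : A →ₐ[R] Aᵐᵒᵖ) (x : A) :
    S.unopLinearMap x = (S x).unop := rfl

lemma mul'_map_unopLinearMap_id_mul_of_eq_algebraMap (S : A →ₐ[R] Aᵐᵒᵖ)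
    {t : A ⊗[R] A} {c : R}
    (ht : LinearMap.mul' R A (map S.unopLinearMap LinearMap.id t) = algebraMap R A c)
    (u : A ⊗[R] A) :
    LinearMap.mul' R A (map S.unopLinearMap LinearMap.id (t * u)) =
      c • LinearMap.mul' R A (map S.unopLinearMap LinearMap.id u) := by
  have hmul_tmul (b b' : A) (t : A ⊗[R] A) :
      LinearMap.mul' R A (map S.unopLinearMap LinearMap.id (t * b ⊗ₜ b')) =
        unop (S b) * LinearMap.mul' R A (map S.unopLinearMap LinearMap.id t) * b' := by
    induction t using TensorProduct.induction_on with
    | zero => simp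
    | tmul a a' => simp [mul_assoc]
    | add u v hu hv => simp [add_mul, mul_add, hu, hv]
  induction u using TensorProduct.induction_on with
  | zero => simp
  | tmul b b' => simp [hmul_tmul, ht, Algebra.smul_def, Algebra.commutes, mul_assoc]
  | add u v hu hv => simp [mul_add, hu, hv]

lemma mul'_map_id_unopLinearMap_mul_of_eq_algebraMap (S : A →ₐ[R] Aᵐᵒᵖ)
    {u : A ⊗[R] A} {c : R}
    (hu : LinearMap.mul' R A (map LinearMap.id S.unopLinearMap u) = algebraMap R A c)
    (t : A ⊗[R] A) :
    LinearMap.mul' R A (map LinearMap.id S.unopLinearMap (t * u)) =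
      c • LinearMap.mul' R A (map LinearMap.id S.unopLinearMap t) := by
  have htmul_mul (a a' : A) (u : A ⊗[R] A) :
      LinearMap.mul' R A (map LinearMap.id S.unopLinearMap (a ⊗ₜ a' * u)) =
        a * LinearMap.mul' R A (map LinearMap.id S.unopLinearMap u) * unop (S a') := by
    induction u using TensorProduct.induction_on with
    | zero => simp
    | tmul b b' => simp [mul_assoc]
    | add u v hu hv => simp [add_mul, mul_add, hu, hv]
  induction t using TensorProduct.induction_on with
  | zero => simp
  | tmul a a' => simp [htmul_mul, hu, Algebra.smul_def, Algebra.commutes, mul_assoc]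
  | add t t' ht ht' => simp [add_mul, ht, ht']

theorem mul'_map_unopLinearMap_id_comul_of_adjoin_eq_top {s : Set A}
    (hs : Algebra.adjoin R s = ⊤) (Δ : A →ₐ[R] A ⊗[R] A) (ε : A →ₐ[R] R) (S : A →ₐ[R] Aᵐᵒᵖ)
    (h : ∀ x ∈ s, LinearMap.mul' R A (map S.unopLinearMap LinearMap.id (Δ x)) =
      algebraMap R A (ε x)) :
    LinearMap.mul' R A ∘ₗ map S.unopLinearMap LinearMap.id ∘ₗ Δ.toLinearMap =
      Algebra.linearMap R A ∘ₗ ε.toLinearMap := by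
  ext x
  have hx : x ∈ Algebra.adjoin R s := hs ▸ Algebra.mem_top
  induction hx using Algebra.adjoin_induction with
  | mem x hx => exact h x hx
  | algebraMap r => simp
  | add x y _ _ hx hy => simp_all
  | mul x y _ _ hx hy =>
    simp only [LinearMap.comp_apply, AlgHom.toLinearMap_apply, Algebra.linearMap_apply,
      map_mul] at hx hy ⊢
    rw [mul'_map_unopLinearMap_id_mul_of_eq_algebraMap S hx, hy, Algebra.smul_def]

theorem mul'_map_id_unopLinearMap_comul_of_adjoin_eq_top {s : Set A}
    (hs : Algebra.adjoin R s = ⊤) (Δ : A →ₐ[R] A ⊗[R] A) (ε : A →ₐ[R] R) (S : A →ₐ[R] Aᵐᵒᵖ)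
    (h : ∀ x ∈ s, LinearMap.mul' R A (map LinearMap.id S.unopLinearMap (Δ x)) =
      algebraMap R A (ε x)) :
    LinearMap.mul' R A ∘ₗ map LinearMap.id S.unopLinearMap ∘ₗ Δ.toLinearMap =
      Algebra.linearMap R A ∘ₗ ε.toLinearMap := by
  ext x
  have hx : x ∈ Algebra.adjoin R s := hs ▸ Algebra.mem_top
  induction hx using Algebra.adjoin_induction with
  | mem x hx => exact h x hx
  | algebraMap r => simp
  | add x y _ _ hx hy => simp_all
  | mul x y _ _ hx hy =>
    simp only [LinearMap.comp_apply, AlgHom.toLinearMap_apply, Algebra.linearMap_apply,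
      map_mul] at hx hy ⊢
    rw [mul'_map_id_unopLinearMap_mul_of_eq_algebraMap S hy, hx, Algebra.smul_def,
      Algebra.commutes]

end HopfAxiomsOnGenerators

section SkewCommute

variable {R B : Type*} [CommSemiring R] [Semiring B] [Algebra R B]

lemma mul_eq_smul_mul_of_inverse {x x' y : B} {c : R} (h : x * y = c • (y * x))
    (hxx' : x * x' = 1) (hx'x : x' * x = 1) : y * x' = c • (x' * y) :=
  calc y * x' = x' * (x * y) * x' := by rw [← mul_assoc, hx'x, one_mul]
    _ = c • (x' * y) := by
      rw [h, mul_smul_comm, smul_mul_assoc, mul_assoc, mul_assoc, hxx', mul_one]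

lemma mul_mul_eq_smul_of_commute_left {x y g : B} {c : R} (hx : Commute x g)
    (hy : y * g = c • (g * y)) : x * y * g = c • (g * (x * y)) := by
  rw [mul_assoc, hy, mul_smul_comm, ← mul_assoc, hx.eq, mul_assoc]

lemma mul_mul_eq_smul_of_commute_right {x y g : B} {c : R} (hx : x * g = c • (g * x))
    (hy : Commute y g) : x * y * g = c • (g * (x * y)) := by
  rw [mul_assoc, hy.eq, ← mul_assoc, hx, smul_mul_assoc, mul_assoc]

end SkewCommute

namespace UqAlgebra

open TensorProduct MulOpposite

noncomputable def gen : UGen θ → UqAlgebra k q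
  | .E i => UE k q i
  | .F i => UF k q i
  | .K i => UK k q i
  | .Kinv i => UKinv k q i
  | .L i => UL k q i
  | .Linv i => ULinv k q i

lemma mkAlgHom_Ugen (g : UGen θ) : RingQuot.mkAlgHom k (URel k q) (Ugen k g) = gen k q g := by
  cases g <;> rfl

lemma adjoin_range_gen : Algebra.adjoin k (Set.range (gen k q)) = ⊤ := by
  have : gen k q = RingQuot.mkAlgHom k (URel k q) ∘ FreeAlgebra.ι k := by
    funext g
    exact (mkAlgHom_Ugen k q g).symm
  rw [this, Algebra.adjoin_range_eq_range_freeAlgebra_lift, FreeAlgebra.lift_comp_ι,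
    AlgHom.range_eq_top]
  exact RingQuot.mkAlgHom_surjective k (URel k q)

variable {k q}

section Relations

lemma commute_gen {X Y : UGen θ} (hX : X.IsToral) (hY : Y.IsToral) :
    Commute (gen k q X) (gen k q Y) := by
  show gen k q X * gen k q Y = gen k q Y * gen k q X
  simpa only [map_mul, mkAlgHom_Ugen] using RingQuot.mkAlgHom_rel k
    (URel.toral_comm (k := k) (q := q) X Y hX hY)

variable (i j : Fin θ)

@[simp] lemma UK_mul_UKinv : UK k q i * UKinv k q i = 1 := by
  simpa only [map_mul, map_one, mkAlgHom_Ugen, gen] using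
    RingQuot.mkAlgHom_rel k (URel.K_Kinv (q := q) i)

@[simp] lemma UKinv_mul_UK : UKinv k q i * UK k q i = 1 := by
  simpa only [map_mul, map_one, mkAlgHom_Ugen, gen] using
    RingQuot.mkAlgHom_rel k (URel.Kinv_K (q := q) i)

@[simp] lemma UL_mul_ULinv : UL k q i * ULinv k q i = 1 := by
  simpa only [map_mul, map_one, mkAlgHom_Ugen, gen] using
    RingQuot.mkAlgHom_rel k (URel.L_Linv (q := q) i)

@[simp] lemma ULinv_mul_UL : ULinv k q i * UL k q i = 1 := by
  simpa only [map_mul, map_one, mkAlgHom_Ugen, gen] using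
    RingQuot.mkAlgHom_rel k (URel.Linv_L (q := q) i)

lemma UK_mul_UE : UK k q i * UE k q j = (q i j : k) • (UE k q j * UK k q i) := by
  simpa only [map_mul, map_smul, mkAlgHom_Ugen, gen] using
    RingQuot.mkAlgHom_rel k (URel.K_E (q := q) i j)

lemma UL_mul_UE : UL k q i * UE k q j = (q j i : k)⁻¹ • (UE k q j * UL k q i) := by
  simpa only [map_mul, map_smul, mkAlgHom_Ugen, gen] using
    RingQuot.mkAlgHom_rel k (URel.L_E (q := q) i j)

lemma UK_mul_UF : UK k q i * UF k q j = (q i j : k)⁻¹ • (UF k q j * UK k q i) := by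
  simpa only [map_mul, map_smul, mkAlgHom_Ugen, gen] using
    RingQuot.mkAlgHom_rel k (URel.K_F (q := q) i j)

lemma UL_mul_UF : UL k q i * UF k q j = (q j i : k) • (UF k q j * UL k q i) := by
  simpa only [map_mul, map_smul, mkAlgHom_Ugen, gen] using
    RingQuot.mkAlgHom_rel k (URel.L_F (q := q) i j)

lemma UE_mul_UF : UE k q i * UF k q j =
    UF k q j * UE k q i + if i = j then UK k q i - UL k q i else 0 := by
  have h := RingQuot.mkAlgHom_rel k (URel.E_F (q := q) i j)
  simp only [map_sub, map_mul, apply_ite (RingQuot.mkAlgHom k (URel k q)), map_zero,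
    mkAlgHom_Ugen, gen] at h
  exact eq_add_of_sub_eq' h

lemma UK_mul_UK_comm : UK k q i * UK k q j = UK k q j * UK k q i :=
  commute_gen (X := .K i) (Y := .K j) trivial trivial

lemma UL_mul_UL_comm : UL k q i * UL k q j = UL k q j * UL k q i :=
  commute_gen (X := .L i) (Y := .L j) trivial trivial

lemma UL_mul_UK_comm : UL k q i * UK k q j = UK k q j * UL k q i :=
  commute_gen (X := .L i) (Y := .K j) trivial trivial

lemma UE_mul_UKinv : UE k q j * UKinv k q i = (q i j : k) • (UKinv k q i * UE k q j) :=
  mul_eq_smul_mul_of_inverse (UK_mul_UE i j) (UK_mul_UKinv i) (UKinv_mul_UK i)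

lemma UE_mul_ULinv : UE k q j * ULinv k q i = (q j i : k)⁻¹ • (ULinv k q i * UE k q j) :=
  mul_eq_smul_mul_of_inverse (UL_mul_UE i j) (UL_mul_ULinv i) (ULinv_mul_UL i)

lemma UF_mul_UKinv : UF k q j * UKinv k q i = (q i j : k)⁻¹ • (UKinv k q i * UF k q j) :=
  mul_eq_smul_mul_of_inverse (UK_mul_UF i j) (UK_mul_UKinv i) (UKinv_mul_UK i)

lemma UF_mul_ULinv : UF k q j * ULinv k q i = (q j i : k) • (ULinv k q i * UF k q j) :=
  mul_eq_smul_mul_of_inverse (UL_mul_UF i j) (UL_mul_ULinv i) (ULinv_mul_UL i)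

lemma UF_ULinv_mul_UKinv_UE_sub :
    UF k q j * ULinv k q j * (UKinv k q i * UE k q i) -
        UKinv k q i * UE k q i * (UF k q j * ULinv k q j) =
      if i = j then UKinv k q i - ULinv k q i else 0 := by
  have hEF : UKinv k q i * UE k q i * (UF k q j * ULinv k q j) =
      (q i j : k)⁻¹ • (UKinv k q i * UF k q j * ULinv k q j * UE k q i) +
        if i = j then ULinv k q i - UKinv k q i else 0 := by
    rw [mul_assoc, ← mul_assoc (UE k q i), UE_mul_UF, add_mul, mul_add, mul_assoc, UE_mul_ULinv]
    split_ifs with hij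
    · subst hij
      simp only [sub_mul, mul_sub, ← mul_assoc, UKinv_mul_UK, one_mul, mul_smul_comm]
      simp only [mul_assoc, UL_mul_ULinv, mul_one]
    · simp only [mul_smul_comm, mul_assoc, zero_mul, mul_zero]
  have hFE : UF k q j * ULinv k q j * (UKinv k q i * UE k q i) =
      (q i j : k)⁻¹ • (UKinv k q i * UF k q j * ULinv k q j * UE k q i) := by
    have hLK : ULinv k q j * UKinv k q i = UKinv k q i * ULinv k q j :=
      commute_gen (X := .Linv j) (Y := .Kinv i) trivial trivial
    rw [mul_assoc, ← mul_assoc (ULinv k q j), hLK]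
    simp only [← mul_assoc, UF_mul_UKinv, smul_mul_assoc]
  rw [hEF, hFE]
  split_ifs <;> abel

end Relations

/- `simp` does not unify the negation `RingQuot.instNeg` of `𝒰(q)` with the one `neg_mul` and
`mul_neg` are stated for, so these two rules are restated here. -/
@[simp] lemma neg_mul' (x y : UqAlgebra k q) : -x * y = -(x * y) := neg_mul x y

@[simp] lemma mul_neg' (x y : UqAlgebra k q) : x * -y = -(x * y) := mul_neg x y

section Lift

variable {B : Type*} [Semiring B] [Algebra k B]

variable (q) in
abbrev RespectsURel (f : UGen θ → B) : Prop :=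
  ∀ ⦃x y⦄, URel k q x y → FreeAlgebra.lift k f x = FreeAlgebra.lift k f y

noncomputable def liftGen (f : UGen θ → B) (hf : RespectsURel q f) : UqAlgebra k q →ₐ[k] B :=
  RingQuot.liftAlgHom k ⟨FreeAlgebra.lift k f, hf⟩

@[simp] lemma liftGen_gen (f : UGen θ → B) (hf : RespectsURel q f) (g : UGen θ) :
    liftGen f hf (gen k q g) = f g := by
  rw [liftGen, ← mkAlgHom_Ugen, RingQuot.liftAlgHom_mkAlgHom_apply, Ugen,
    FreeAlgebra.lift_ι_apply]

@[simp] lemma lift_Ugen (f : UGen θ → B) (g : UGen θ) : FreeAlgebra.lift k f (Ugen k g) = f g :=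
  FreeAlgebra.lift_ι_apply f g

end Lift

variable (k) in
def counitGen : UGen θ → k
  | .E _ | .F _ => 0
  | _ => 1

variable (k q) in
noncomputable def counit : UqAlgebra k q →ₐ[k] k :=
  liftGen (counitGen k) fun x y h => by
    cases h <;> simp [counitGen, mul_comm, apply_ite (FreeAlgebra.lift k (counitGen k))]

variable (k q) in
noncomputable def comulGen : UGen θ → UqAlgebra k q ⊗[k] UqAlgebra k q
  | .E i => gen k q (.E i) ⊗ₜ 1 + gen k q (.K i) ⊗ₜ gen k q (.E i)
  | .F i => gen k q (.F i) ⊗ₜ gen k q (.L i) + 1 ⊗ₜ gen k q (.F i)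
  | X => gen k q X ⊗ₜ gen k q X

lemma comulGen_of_isToral {X : UGen θ} (hX : X.IsToral) :
    comulGen k q X = gen k q X ⊗ₜ gen k q X := by
  cases X <;> first | rfl | exact hX.elim

lemma respectsURel_comulGen : RespectsURel q (comulGen k q) := by
  intro x y h
  cases h with
  | toral_comm X Y hX hY =>
    simp only [map_mul, lift_Ugen, comulGen_of_isToral hX, comulGen_of_isToral hY,
      Algebra.TensorProduct.tmul_mul_tmul, (commute_gen hX hY).eq]
  | E_F i j =>
    simp only [map_sub, map_mul, lift_Ugen, apply_ite (FreeAlgebra.lift k (comulGen k q)),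
      map_zero, comulGen, gen, mul_add, add_mul, Algebra.TensorProduct.tmul_mul_tmul, one_mul,
      mul_one, UE_mul_UF, UK_mul_UF, UL_mul_UE, ← smul_tmul', tmul_smul]
    split_ifs with hij
    · subst hij
      simp only [add_tmul, tmul_add, sub_tmul, tmul_sub]
      abel
    · simp only [add_zero]
      abel
  | _ =>
    simp [comulGen, gen, Algebra.TensorProduct.tmul_mul_tmul, Algebra.TensorProduct.one_def,
      mul_add, add_mul, UK_mul_UE, UL_mul_UE, UK_mul_UF, UL_mul_UF, UK_mul_UK_comm,
      UL_mul_UL_comm, UL_mul_UK_comm, ← smul_tmul', tmul_smul]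

variable (k q) in
noncomputable def comul : UqAlgebra k q →ₐ[k] UqAlgebra k q ⊗[k] UqAlgebra k q :=
  liftGen (comulGen k q) respectsURel_comulGen

variable (k q) in
noncomputable def antipodeGen : UGen θ → UqAlgebra k q
  | .E i => -(gen k q (.Kinv i) * gen k q (.E i))
  | .F i => -(gen k q (.F i) * gen k q (.Linv i))
  | .K i => gen k q (.Kinv i)
  | .Kinv i => gen k q (.K i)
  | .L i => gen k q (.Linv i)
  | .Linv i => gen k q (.L i)

lemma antipodeGen_of_isToral {X : UGen θ} (hX : X.IsToral) :
    ∃ Y : UGen θ, Y.IsToral ∧ antipodeGen k q X = gen k q Y := by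
  cases X with
  | E i | F i => exact hX.elim
  | K i => exact ⟨.Kinv i, trivial, rfl⟩
  | Kinv i => exact ⟨.K i, trivial, rfl⟩
  | L i => exact ⟨.Linv i, trivial, rfl⟩
  | Linv i => exact ⟨.L i, trivial, rfl⟩

lemma respectsURel_op_antipodeGen : RespectsURel q (op ∘ antipodeGen k q) := by
  intro x y h
  apply unop_injective
  cases h with
  | toral_comm X Y hX hY =>
    obtain ⟨X', hX', hX'eq⟩ := antipodeGen_of_isToral (k := k) (q := q) hX
    obtain ⟨Y', hY', hY'eq⟩ := antipodeGen_of_isToral (k := k) (q := q) hY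
    simp only [map_mul, lift_Ugen, unop_mul, Function.comp_apply, unop_op, hX'eq, hY'eq,
      (commute_gen hX' hY').eq]
  | E_F i j =>
    simp only [map_sub, map_mul, lift_Ugen, apply_ite (FreeAlgebra.lift k (op ∘ antipodeGen k q)),
      map_zero, Function.comp_apply, unop_sub, unop_mul, unop_op, apply_ite unop, unop_zero,
      antipodeGen, gen, neg_mul', mul_neg', neg_neg, UF_ULinv_mul_UKinv_UE_sub]
  | K_E i j =>
    simpa [antipodeGen, gen] using mul_mul_eq_smul_of_commute_left
      (commute_gen (k := k) (q := q) (X := .Kinv j) (Y := .Kinv i) trivial trivial)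
      (UE_mul_UKinv i j)
  | L_E i j =>
    simpa [antipodeGen, gen] using mul_mul_eq_smul_of_commute_left
      (commute_gen (k := k) (q := q) (X := .Kinv j) (Y := .Linv i) trivial trivial)
      (UE_mul_ULinv i j)
  | K_F i j =>
    simpa [antipodeGen, gen] using mul_mul_eq_smul_of_commute_right (UF_mul_UKinv i j)
      (commute_gen (k := k) (q := q) (X := .Linv j) (Y := .Kinv i) trivial trivial)
  | L_F i j =>
    simpa [antipodeGen, gen] using mul_mul_eq_smul_of_commute_right (UF_mul_ULinv i j)
      (commute_gen (k := k) (q := q) (X := .Linv j) (Y := .Linv i) trivial trivial)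
  | _ => simp [antipodeGen, gen]

variable (k q) in
noncomputable def antipodeOp : UqAlgebra k q →ₐ[k] (UqAlgebra k q)ᵐᵒᵖ :=
  liftGen (op ∘ antipodeGen k q) respectsURel_op_antipodeGen

@[simp] lemma counit_gen (g : UGen θ) : counit k q (gen k q g) = counitGen k g :=
  liftGen_gen _ _ g

@[simp] lemma comul_gen (g : UGen θ) : comul k q (gen k q g) = comulGen k q g :=
  liftGen_gen _ _ g

@[simp] lemma antipodeOp_gen (g : UGen θ) :
    antipodeOp k q (gen k q g) = op (antipodeGen k q g) :=
  liftGen_gen _ _ g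

lemma assoc_map_comul_id_comul_gen (g : UGen θ) :
    TensorProduct.assoc k _ _ _ (map (comul k q).toLinearMap LinearMap.id (comul k q (gen k q g))) =
      map LinearMap.id (comul k q).toLinearMap (comul k q (gen k q g)) := by
  cases g <;> simp [comulGen, Algebra.TensorProduct.one_def, add_tmul, tmul_add, add_assoc]

lemma lid_map_counit_id_comul_gen (g : UGen θ) :
    TensorProduct.lid k _ (map (counit k q).toLinearMap LinearMap.id (comul k q (gen k q g))) =
      gen k q g := by
  cases g <;> simp [comulGen, counitGen]

lemma rid_map_id_counit_comul_gen (g : UGen θ) :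
    TensorProduct.rid k _ (map LinearMap.id (counit k q).toLinearMap (comul k q (gen k q g))) =
      gen k q g := by
  cases g <;> simp [comulGen, counitGen]

lemma mul'_map_antipode_id_comul_gen (g : UGen θ) :
    LinearMap.mul' k _ (map (antipodeOp k q).unopLinearMap LinearMap.id (comul k q (gen k q g))) =
      algebraMap k _ (counit k q (gen k q g)) := by
  cases g <;> simp [comulGen, counitGen, antipodeGen] <;> simp [gen, mul_assoc]

lemma mul'_map_id_antipode_comul_gen (g : UGen θ) :
    LinearMap.mul' k _ (map LinearMap.id (antipodeOp k q).unopLinearMap (comul k q (gen k q g))) =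
      algebraMap k _ (counit k q (gen k q g)) := by
  cases g <;> simp [comulGen, counitGen, antipodeGen] <;> simp [gen, ← mul_assoc]

end UqAlgebra

/-- There is a Hopf algebra structure on `𝒰(q)` (comultiplication and counit are algebra
homomorphisms, coassociative and counital, with an antipode), compatible with its given
algebra structure, such that `Δ(K_i) = K_i ⊗ K_i`, `Δ(L_i) = L_i ⊗ L_i`,
`Δ(E_i) = E_i ⊗ 1 + K_i ⊗ E_i`, `Δ(F_i) = F_i ⊗ L_i + 1 ⊗ F_i`, `ε(K_i) = ε(L_i) = 1`
and `ε(E_i) = ε(F_i) = 0`. -/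
theorem UqAlgebra_hopf :
    ∃ (comul : UqAlgebra k q →ₐ[k] UqAlgebra k q ⊗[k] UqAlgebra k q)
      (counit : UqAlgebra k q →ₐ[k] k)
      (antip : UqAlgebra k q →ₗ[k] UqAlgebra k q),
    -- coassociativity
    ((TensorProduct.assoc k (UqAlgebra k q) (UqAlgebra k q) (UqAlgebra k q)).toLinearMap ∘ₗ
        TensorProduct.map comul.toLinearMap LinearMap.id ∘ₗ comul.toLinearMap =
      TensorProduct.map LinearMap.id comul.toLinearMap ∘ₗ comul.toLinearMap) ∧
    -- counit axioms
    ((TensorProduct.lid k (UqAlgebra k q)).toLinearMap ∘ₗ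
        TensorProduct.map counit.toLinearMap LinearMap.id ∘ₗ comul.toLinearMap =
      LinearMap.id) ∧
    ((TensorProduct.rid k (UqAlgebra k q)).toLinearMap ∘ₗ
        TensorProduct.map LinearMap.id counit.toLinearMap ∘ₗ comul.toLinearMap =
      LinearMap.id) ∧
    -- antipode axioms
    (LinearMap.mul' k (UqAlgebra k q) ∘ₗ
        TensorProduct.map antip LinearMap.id ∘ₗ comul.toLinearMap =
      Algebra.linearMap k (UqAlgebra k q) ∘ₗ counit.toLinearMap) ∧
    (LinearMap.mul' k (UqAlgebra k q) ∘ₗ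
        TensorProduct.map LinearMap.id antip ∘ₗ comul.toLinearMap =
      Algebra.linearMap k (UqAlgebra k q) ∘ₗ counit.toLinearMap) ∧
    -- prescribed values of the comultiplication
    (∀ i, comul (UK k q i) = UK k q i ⊗ₜ[k] UK k q i) ∧
    (∀ i, comul (UL k q i) = UL k q i ⊗ₜ[k] UL k q i) ∧
    (∀ i, comul (UE k q i) = UE k q i ⊗ₜ[k] 1 + UK k q i ⊗ₜ[k] UE k q i) ∧
    (∀ i, comul (UF k q i) = UF k q i ⊗ₜ[k] UL k q i + 1 ⊗ₜ[k] UF k q i) ∧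
    -- prescribed values of the counit
    (∀ i, counit (UK k q i) = 1) ∧
    (∀ i, counit (UL k q i) = 1) ∧
    (∀ i, counit (UE k q i) = 0) ∧
    (∀ i, counit (UF k q i) = 0) := by
  open UqAlgebra in
  have hgen := adjoin_range_gen k q
  refine ⟨comul k q, counit k q, (antipodeOp k q).unopLinearMap,
    coassoc_of_adjoin_eq_top hgen _ (Set.forall_mem_range.2 assoc_map_comul_id_comul_gen),
    lid_comp_counit_comul_of_adjoin_eq_top hgen _ _
      (Set.forall_mem_range.2 lid_map_counit_id_comul_gen),
    rid_comp_counit_comul_of_adjoin_eq_top hgen _ _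
      (Set.forall_mem_range.2 rid_map_id_counit_comul_gen),
    mul'_map_unopLinearMap_id_comul_of_adjoin_eq_top hgen _ _ _
      (Set.forall_mem_range.2 mul'_map_antipode_id_comul_gen),
    mul'_map_id_unopLinearMap_comul_of_adjoin_eq_top hgen _ _ _
      (Set.forall_mem_range.2 mul'_map_id_antipode_comul_gen),
    fun i => comul_gen (.K i), fun i => comul_gen (.L i), fun i => comul_gen (.E i),
    fun i => comul_gen (.F i), fun i => counit_gen (.K i), fun i => counit_gen (.L i),
    fun i => counit_gen (.E i), fun i => counit_gen (.F i)⟩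
end

section
/- There exists a unique k-algebra automorphism φ₁ of 𝒰(q) such that φ₁(K_i) = K_i⁻, φ₁(L_i) = L_i⁻, φ₁(E_i) = F_i·L_i⁻, and φ₁(F_i) = K_i⁻·E_i for all 1 ≤ i ≤ θ. -/
variable (k : Type*) [Field k] {θ : ℕ}

variable (q : Fin θ → Fin θ → kˣ)

section Phi1Aux

lemma Uq_mk_rel {x y : FreeAlgebra k (UGen θ)} (h : URel k q x y) :
    RingQuot.mkAlgHom k (URel k q) x = RingQuot.mkAlgHom k (URel k q) y :=
  RingQuot.mkAlgHom_rel k h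

lemma Uq_tcomm {X Y : UGen θ} (hX : X.IsToral) (hY : Y.IsToral) :
    RingQuot.mkAlgHom k (URel k q) (Ugen k X) * RingQuot.mkAlgHom k (URel k q) (Ugen k Y)
      = RingQuot.mkAlgHom k (URel k q) (Ugen k Y) * RingQuot.mkAlgHom k (URel k q) (Ugen k X) := by
  rw [← map_mul, ← map_mul, Uq_mk_rel k q (URel.toral_comm X Y hX hY)]

lemma UKinv_UKinv_comm (i j : Fin θ) :
    UKinv k q i * UKinv k q j = UKinv k q j * UKinv k q i := by
  unfold UKinv; exact Uq_tcomm k q trivial trivial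

lemma UKinv_ULinv_comm (i j : Fin θ) :
    UKinv k q i * ULinv k q j = ULinv k q j * UKinv k q i := by
  unfold UKinv ULinv; exact Uq_tcomm k q trivial trivial

lemma ULinv_UKinv_comm (i j : Fin θ) :
    ULinv k q i * UKinv k q j = UKinv k q j * ULinv k q i := by
  unfold UKinv ULinv; exact Uq_tcomm k q trivial trivial

lemma ULinv_ULinv_comm (i j : Fin θ) :
    ULinv k q i * ULinv k q j = ULinv k q j * ULinv k q i := by
  unfold ULinv; exact Uq_tcomm k q trivial trivial

lemma UK_mul_UKinv (i : Fin θ) : UK k q i * UKinv k q i = 1 := by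
  unfold UK UKinv; rw [← map_mul, Uq_mk_rel k q (URel.K_Kinv i), map_one]

lemma UKinv_mul_UK (i : Fin θ) : UKinv k q i * UK k q i = 1 := by
  unfold UK UKinv; rw [← map_mul, Uq_mk_rel k q (URel.Kinv_K i), map_one]

lemma UL_mul_ULinv (i : Fin θ) : UL k q i * ULinv k q i = 1 := by
  unfold UL ULinv; rw [← map_mul, Uq_mk_rel k q (URel.L_Linv i), map_one]

lemma ULinv_mul_UL (i : Fin θ) : ULinv k q i * UL k q i = 1 := by
  unfold UL ULinv; rw [← map_mul, Uq_mk_rel k q (URel.Linv_L i), map_one]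

lemma UK_UE (i j : Fin θ) : UK k q i * UE k q j = (q i j : k) • (UE k q j * UK k q i) := by
  unfold UK UE; rw [← map_mul, Uq_mk_rel k q (URel.K_E i j), map_smul, map_mul]

lemma UL_UE (i j : Fin θ) : UL k q i * UE k q j = (q j i : k)⁻¹ • (UE k q j * UL k q i) := by
  unfold UL UE; rw [← map_mul, Uq_mk_rel k q (URel.L_E i j), map_smul, map_mul]

lemma UK_UF (i j : Fin θ) : UK k q i * UF k q j = (q i j : k)⁻¹ • (UF k q j * UK k q i) := by
  unfold UK UF; rw [← map_mul, Uq_mk_rel k q (URel.K_F i j), map_smul, map_mul]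

lemma UL_UF (i j : Fin θ) : UL k q i * UF k q j = (q j i : k) • (UF k q j * UL k q i) := by
  unfold UL UF; rw [← map_mul, Uq_mk_rel k q (URel.L_F i j), map_smul, map_mul]

lemma UE_UF (i j : Fin θ) :
    UE k q i * UF k q j - UF k q j * UE k q i
      = if i = j then UK k q i - UL k q i else 0 := by
  have h := Uq_mk_rel k q (URel.E_F i j)
  unfold UE UF UK UL
  rw [← map_mul, ← map_mul, ← map_sub, h]
  split_ifs <;> simp

lemma Uq_conj_inv {A : Type*} [Ring A] [Algebra k A] {c : k} (hc : c ≠ 0) {X Xi Y : A}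
    (h1 : X * Xi = 1) (h2 : Xi * X = 1) (h : X * Y = c • (Y * X)) :
    Xi * Y = c⁻¹ • (Y * Xi) := by
  have hYX : Y * X = c⁻¹ • (X * Y) := by
    rw [h, smul_smul, inv_mul_cancel₀ hc, one_smul]
  calc Xi * Y = Xi * (Y * (X * Xi)) := by rw [h1, mul_one]
    _ = Xi * ((Y * X) * Xi) := by rw [← mul_assoc Y X Xi]
    _ = Xi * ((c⁻¹ • (X * Y)) * Xi) := by rw [hYX]
    _ = c⁻¹ • ((Xi * X) * (Y * Xi)) := by
        simp only [smul_mul_assoc, mul_smul_comm, mul_assoc]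
    _ = c⁻¹ • (Y * Xi) := by rw [h2, one_mul]

lemma UKinv_UE (i j : Fin θ) :
    UKinv k q i * UE k q j = (q i j : k)⁻¹ • (UE k q j * UKinv k q i) :=
  Uq_conj_inv k (Units.ne_zero _) (UK_mul_UKinv k q i) (UKinv_mul_UK k q i) (UK_UE k q i j)

lemma ULinv_UE (i j : Fin θ) :
    ULinv k q i * UE k q j = (q j i : k) • (UE k q j * ULinv k q i) := by
  have := Uq_conj_inv k (inv_ne_zero (Units.ne_zero (q j i)))
    (UL_mul_ULinv k q i) (ULinv_mul_UL k q i) (UL_UE k q i j)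
  rwa [inv_inv] at this

lemma UKinv_UF (i j : Fin θ) :
    UKinv k q i * UF k q j = (q i j : k) • (UF k q j * UKinv k q i) := by
  have := Uq_conj_inv k (inv_ne_zero (Units.ne_zero (q i j)))
    (UK_mul_UKinv k q i) (UKinv_mul_UK k q i) (UK_UF k q i j)
  rwa [inv_inv] at this

lemma ULinv_UF (i j : Fin θ) :
    ULinv k q i * UF k q j = (q j i : k)⁻¹ • (UF k q j * ULinv k q i) :=
  Uq_conj_inv k (Units.ne_zero _) (UL_mul_ULinv k q i) (ULinv_mul_UL k q i) (UL_UF k q i j)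

lemma Uq_swap_assoc {A : Type*} [Ring A] {a b : A} (h : a * b = b * a) (x : A) :
    a * (b * x) = b * (a * x) := by rw [← mul_assoc, h, mul_assoc]

lemma Uq_sswap_assoc {A : Type*} [Ring A] [Algebra k A] {c : k} {a b : A}
    (h : a * b = c • (b * a)) (x : A) : a * (b * x) = c • (b * (a * x)) := by
  rw [← mul_assoc, h, smul_mul_assoc, mul_assoc]

/-- The images of the generators under `φ₁`. -/
noncomputable def phiGen : UGen θ → UqAlgebra k q
  | .E i => UF k q i * ULinv k q i
  | .F i => UKinv k q i * UE k q i
  | .K i => UKinv k q i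
  | .Kinv i => UK k q i
  | .L i => ULinv k q i
  | .Linv i => UL k q i

/-- The images of the generators under the inverse of `φ₁`. -/
noncomputable def psiGen : UGen θ → UqAlgebra k q
  | .E i => UKinv k q i * UF k q i
  | .F i => UE k q i * ULinv k q i
  | .K i => UKinv k q i
  | .Kinv i => UK k q i
  | .L i => ULinv k q i
  | .Linv i => UL k q i

lemma UKinv_sub_mul (i : Fin θ) :
    UKinv k q i * ((UK k q i - UL k q i) * ULinv k q i) = ULinv k q i - UKinv k q i := by
  rw [sub_mul, mul_sub, ← mul_assoc, UKinv_mul_UK, one_mul, UL_mul_ULinv, mul_one]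

lemma phiGen_rel : ∀ ⦃x y⦄, URel k q x y →
    (FreeAlgebra.lift k (phiGen k q)) x = (FreeAlgebra.lift k (phiGen k q)) y := by
  intro x y h
  induction h with
  | toral_comm X Y hX hY =>
      simp only [Ugen, map_mul, FreeAlgebra.lift_ι_apply]
      cases X <;> cases Y <;> first
        | exact hX.elim
        | exact hY.elim
        | exact Uq_tcomm k q trivial trivial
  | K_Kinv i =>
      simpa only [Ugen, map_mul, map_one, FreeAlgebra.lift_ι_apply, phiGen] using
        UKinv_mul_UK k q i
  | Kinv_K i =>
      simpa only [Ugen, map_mul, map_one, FreeAlgebra.lift_ι_apply, phiGen] using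
        UK_mul_UKinv k q i
  | L_Linv i =>
      simpa only [Ugen, map_mul, map_one, FreeAlgebra.lift_ι_apply, phiGen] using
        ULinv_mul_UL k q i
  | Linv_L i =>
      simpa only [Ugen, map_mul, map_one, FreeAlgebra.lift_ι_apply, phiGen] using
        UL_mul_ULinv k q i
  | K_E i j =>
      simp only [Ugen, map_mul, map_smul, FreeAlgebra.lift_ι_apply, phiGen]
      calc UKinv k q i * (UF k q j * ULinv k q j)
          = (q i j : k) • (UF k q j * (UKinv k q i * ULinv k q j)) :=
            Uq_sswap_assoc k (UKinv_UF k q i j) _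
        _ = (q i j : k) • (UF k q j * (ULinv k q j * UKinv k q i)) := by
            rw [UKinv_ULinv_comm k q i j]
        _ = (q i j : k) • (UF k q j * ULinv k q j * UKinv k q i) := by rw [mul_assoc]
  | L_E i j =>
      simp only [Ugen, map_mul, map_smul, FreeAlgebra.lift_ι_apply, phiGen]
      calc ULinv k q i * (UF k q j * ULinv k q j)
          = (q j i : k)⁻¹ • (UF k q j * (ULinv k q i * ULinv k q j)) :=
            Uq_sswap_assoc k (ULinv_UF k q i j) _
        _ = (q j i : k)⁻¹ • (UF k q j * (ULinv k q j * ULinv k q i)) := by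
            rw [ULinv_ULinv_comm k q i j]
        _ = (q j i : k)⁻¹ • (UF k q j * ULinv k q j * ULinv k q i) := by rw [mul_assoc]
  | K_F i j =>
      simp only [Ugen, map_mul, map_smul, FreeAlgebra.lift_ι_apply, phiGen]
      calc UKinv k q i * (UKinv k q j * UE k q j)
          = UKinv k q j * (UKinv k q i * UE k q j) :=
            Uq_swap_assoc (UKinv_UKinv_comm k q i j) _
        _ = UKinv k q j * ((q i j : k)⁻¹ • (UE k q j * UKinv k q i)) := by
            rw [UKinv_UE k q i j]
        _ = (q i j : k)⁻¹ • (UKinv k q j * UE k q j * UKinv k q i) := by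
            rw [mul_smul_comm, mul_assoc]
  | L_F i j =>
      simp only [Ugen, map_mul, map_smul, FreeAlgebra.lift_ι_apply, phiGen]
      calc ULinv k q i * (UKinv k q j * UE k q j)
          = UKinv k q j * (ULinv k q i * UE k q j) :=
            Uq_swap_assoc (ULinv_UKinv_comm k q i j) _
        _ = UKinv k q j * ((q j i : k) • (UE k q j * ULinv k q i)) := by
            rw [ULinv_UE k q i j]
        _ = (q j i : k) • (UKinv k q j * UE k q j * ULinv k q i) := by
            rw [mul_smul_comm, mul_assoc]
  | E_F i j =>
      simp only [Ugen, map_mul, map_sub, FreeAlgebra.lift_ι_apply, phiGen]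
      have h1 : UF k q i * ULinv k q i * (UKinv k q j * UE k q j)
          = (q j i : k) • (UF k q i * (UKinv k q j * (UE k q j * ULinv k q i))) := by
        rw [mul_assoc, Uq_swap_assoc (ULinv_UKinv_comm k q i j),
          ULinv_UE k q i j, mul_smul_comm, mul_smul_comm]
      have hEF : UE k q j * UF k q i
          = UF k q i * UE k q j + (if j = i then UK k q j - UL k q j else 0) := by
        rw [← UE_UF k q j i]; abel
      have h2 : UKinv k q j * UE k q j * (UF k q i * ULinv k q i)
          = (q j i : k) • (UF k q i * (UKinv k q j * (UE k q j * ULinv k q i)))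
            + UKinv k q j * ((if j = i then UK k q j - UL k q j else 0) * ULinv k q i) := by
        rw [mul_assoc, ← mul_assoc (UE k q j), hEF, add_mul, mul_add]
        congr 1
        rw [mul_assoc (UF k q i)]
        exact Uq_sswap_assoc k (UKinv_UF k q j i) _
      rw [h1, h2]
      rcases eq_or_ne i j with rfl | hij
      · rw [if_pos rfl, if_pos rfl, UKinv_sub_mul k q i, map_sub]
        simp only [FreeAlgebra.lift_ι_apply, phiGen]
        abel
      · rw [if_neg (Ne.symm hij), if_neg hij]
        simp

lemma psiGen_rel : ∀ ⦃x y⦄, URel k q x y →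
    (FreeAlgebra.lift k (psiGen k q)) x = (FreeAlgebra.lift k (psiGen k q)) y := by
  intro x y h
  induction h with
  | toral_comm X Y hX hY =>
      simp only [Ugen, map_mul, FreeAlgebra.lift_ι_apply]
      cases X <;> cases Y <;> first
        | exact hX.elim
        | exact hY.elim
        | exact Uq_tcomm k q trivial trivial
  | K_Kinv i =>
      simpa only [Ugen, map_mul, map_one, FreeAlgebra.lift_ι_apply, psiGen] using
        UKinv_mul_UK k q i
  | Kinv_K i =>
      simpa only [Ugen, map_mul, map_one, FreeAlgebra.lift_ι_apply, psiGen] using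
        UK_mul_UKinv k q i
  | L_Linv i =>
      simpa only [Ugen, map_mul, map_one, FreeAlgebra.lift_ι_apply, psiGen] using
        ULinv_mul_UL k q i
  | Linv_L i =>
      simpa only [Ugen, map_mul, map_one, FreeAlgebra.lift_ι_apply, psiGen] using
        UL_mul_ULinv k q i
  | K_E i j =>
      simp only [Ugen, map_mul, map_smul, FreeAlgebra.lift_ι_apply, psiGen]
      calc UKinv k q i * (UKinv k q j * UF k q j)
          = UKinv k q j * (UKinv k q i * UF k q j) :=
            Uq_swap_assoc (UKinv_UKinv_comm k q i j) _
        _ = UKinv k q j * ((q i j : k) • (UF k q j * UKinv k q i)) := by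
            rw [UKinv_UF k q i j]
        _ = (q i j : k) • (UKinv k q j * UF k q j * UKinv k q i) := by
            rw [mul_smul_comm, mul_assoc]
  | L_E i j =>
      simp only [Ugen, map_mul, map_smul, FreeAlgebra.lift_ι_apply, psiGen]
      calc ULinv k q i * (UKinv k q j * UF k q j)
          = UKinv k q j * (ULinv k q i * UF k q j) :=
            Uq_swap_assoc (ULinv_UKinv_comm k q i j) _
        _ = UKinv k q j * ((q j i : k)⁻¹ • (UF k q j * ULinv k q i)) := by
            rw [ULinv_UF k q i j]
        _ = (q j i : k)⁻¹ • (UKinv k q j * UF k q j * ULinv k q i) := by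
            rw [mul_smul_comm, mul_assoc]
  | K_F i j =>
      simp only [Ugen, map_mul, map_smul, FreeAlgebra.lift_ι_apply, psiGen]
      calc UKinv k q i * (UE k q j * ULinv k q j)
          = (q i j : k)⁻¹ • (UE k q j * (UKinv k q i * ULinv k q j)) :=
            Uq_sswap_assoc k (UKinv_UE k q i j) _
        _ = (q i j : k)⁻¹ • (UE k q j * (ULinv k q j * UKinv k q i)) := by
            rw [UKinv_ULinv_comm k q i j]
        _ = (q i j : k)⁻¹ • (UE k q j * ULinv k q j * UKinv k q i) := by rw [mul_assoc]
  | L_F i j =>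
      simp only [Ugen, map_mul, map_smul, FreeAlgebra.lift_ι_apply, psiGen]
      calc ULinv k q i * (UE k q j * ULinv k q j)
          = (q j i : k) • (UE k q j * (ULinv k q i * ULinv k q j)) :=
            Uq_sswap_assoc k (ULinv_UE k q i j) _
        _ = (q j i : k) • (UE k q j * (ULinv k q j * ULinv k q i)) := by
            rw [ULinv_ULinv_comm k q i j]
        _ = (q j i : k) • (UE k q j * ULinv k q j * ULinv k q i) := by rw [mul_assoc]
  | E_F i j =>
      simp only [Ugen, map_mul, map_sub, FreeAlgebra.lift_ι_apply, psiGen]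
      have hFE : UF k q i * UE k q j
          = UE k q j * UF k q i - (if j = i then UK k q j - UL k q j else 0) := by
        rw [← UE_UF k q j i]; abel
      have h1 : UKinv k q i * UF k q i * (UE k q j * ULinv k q j)
          = (q i j : k)⁻¹ • (UE k q j * (UKinv k q i * (UF k q i * ULinv k q j)))
            - UKinv k q i * ((if j = i then UK k q j - UL k q j else 0) * ULinv k q j) := by
        rw [mul_assoc, ← mul_assoc (UF k q i), hFE, sub_mul, mul_sub]
        congr 1
        rw [mul_assoc (UE k q j)]
        exact Uq_sswap_assoc k (UKinv_UE k q i j) _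
      have h2 : UE k q j * ULinv k q j * (UKinv k q i * UF k q i)
          = (q i j : k)⁻¹ • (UE k q j * (UKinv k q i * (UF k q i * ULinv k q j))) := by
        rw [mul_assoc, Uq_swap_assoc (ULinv_UKinv_comm k q j i),
          ULinv_UF k q j i, mul_smul_comm, mul_smul_comm]
      rw [h1, h2]
      rcases eq_or_ne i j with rfl | hij
      · rw [if_pos rfl, if_pos rfl, UKinv_sub_mul k q i, map_sub]
        simp only [FreeAlgebra.lift_ι_apply, psiGen]
        abel
      · rw [if_neg (Ne.symm hij), if_neg hij]
        simp

/-- The algebra endomorphism `φ₁` of `𝒰(q)`. -/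
noncomputable def phiHom : UqAlgebra k q →ₐ[k] UqAlgebra k q :=
  RingQuot.liftAlgHom k ⟨FreeAlgebra.lift k (phiGen k q), phiGen_rel k q⟩

/-- The algebra endomorphism inverse to `φ₁`. -/
noncomputable def psiHom : UqAlgebra k q →ₐ[k] UqAlgebra k q :=
  RingQuot.liftAlgHom k ⟨FreeAlgebra.lift k (psiGen k q), psiGen_rel k q⟩

lemma phiHom_gen (g : UGen θ) :
    phiHom k q (RingQuot.mkAlgHom k (URel k q) (Ugen k g)) = phiGen k q g := by
  unfold phiHom Ugen
  rw [RingQuot.liftAlgHom_mkAlgHom_apply, FreeAlgebra.lift_ι_apply]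

lemma psiHom_gen (g : UGen θ) :
    psiHom k q (RingQuot.mkAlgHom k (URel k q) (Ugen k g)) = psiGen k q g := by
  unfold psiHom Ugen
  rw [RingQuot.liftAlgHom_mkAlgHom_apply, FreeAlgebra.lift_ι_apply]

lemma phi_UE (i : Fin θ) : phiHom k q (UE k q i) = UF k q i * ULinv k q i :=
  phiHom_gen k q (.E i)
lemma phi_UF (i : Fin θ) : phiHom k q (UF k q i) = UKinv k q i * UE k q i :=
  phiHom_gen k q (.F i)
lemma phi_UK (i : Fin θ) : phiHom k q (UK k q i) = UKinv k q i :=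
  phiHom_gen k q (.K i)
lemma phi_UKinv (i : Fin θ) : phiHom k q (UKinv k q i) = UK k q i :=
  phiHom_gen k q (.Kinv i)
lemma phi_UL (i : Fin θ) : phiHom k q (UL k q i) = ULinv k q i :=
  phiHom_gen k q (.L i)
lemma phi_ULinv (i : Fin θ) : phiHom k q (ULinv k q i) = UL k q i :=
  phiHom_gen k q (.Linv i)

lemma psi_UE (i : Fin θ) : psiHom k q (UE k q i) = UKinv k q i * UF k q i :=
  psiHom_gen k q (.E i)
lemma psi_UF (i : Fin θ) : psiHom k q (UF k q i) = UE k q i * ULinv k q i :=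
  psiHom_gen k q (.F i)
lemma psi_UK (i : Fin θ) : psiHom k q (UK k q i) = UKinv k q i :=
  psiHom_gen k q (.K i)
lemma psi_UKinv (i : Fin θ) : psiHom k q (UKinv k q i) = UK k q i :=
  psiHom_gen k q (.Kinv i)
lemma psi_UL (i : Fin θ) : psiHom k q (UL k q i) = ULinv k q i :=
  psiHom_gen k q (.L i)
lemma psi_ULinv (i : Fin θ) : psiHom k q (ULinv k q i) = UL k q i :=
  psiHom_gen k q (.Linv i)

lemma phi_psi : (phiHom k q).comp (psiHom k q) = AlgHom.id k (UqAlgebra k q) := by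
  apply RingQuot.ringQuot_ext'
  apply FreeAlgebra.hom_ext
  funext g
  simp only [Function.comp_apply, AlgHom.coe_comp, AlgHom.coe_id, id_eq]
  show phiHom k q (psiHom k q (RingQuot.mkAlgHom k (URel k q) (Ugen k g)))
      = RingQuot.mkAlgHom k (URel k q) (Ugen k g)
  cases g with
  | E i =>
      rw [show RingQuot.mkAlgHom k (URel k q) (Ugen k (UGen.E i)) = UE k q i from rfl,
        psi_UE, map_mul, phi_UKinv, phi_UF, ← mul_assoc, UK_mul_UKinv, one_mul]
  | F i =>
      rw [show RingQuot.mkAlgHom k (URel k q) (Ugen k (UGen.F i)) = UF k q i from rfl,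
        psi_UF, map_mul, phi_UE, phi_ULinv, mul_assoc, ULinv_mul_UL, mul_one]
  | K i =>
      rw [show RingQuot.mkAlgHom k (URel k q) (Ugen k (UGen.K i)) = UK k q i from rfl,
        psi_UK, phi_UKinv]
  | Kinv i =>
      rw [show RingQuot.mkAlgHom k (URel k q) (Ugen k (UGen.Kinv i)) = UKinv k q i from rfl,
        psi_UKinv, phi_UK]
  | L i =>
      rw [show RingQuot.mkAlgHom k (URel k q) (Ugen k (UGen.L i)) = UL k q i from rfl,
        psi_UL, phi_ULinv]
  | Linv i =>
      rw [show RingQuot.mkAlgHom k (URel k q) (Ugen k (UGen.Linv i)) = ULinv k q i from rfl,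
        psi_ULinv, phi_UL]

lemma psi_phi : (psiHom k q).comp (phiHom k q) = AlgHom.id k (UqAlgebra k q) := by
  apply RingQuot.ringQuot_ext'
  apply FreeAlgebra.hom_ext
  funext g
  simp only [Function.comp_apply, AlgHom.coe_comp, AlgHom.coe_id, id_eq]
  show psiHom k q (phiHom k q (RingQuot.mkAlgHom k (URel k q) (Ugen k g)))
      = RingQuot.mkAlgHom k (URel k q) (Ugen k g)
  cases g with
  | E i =>
      rw [show RingQuot.mkAlgHom k (URel k q) (Ugen k (UGen.E i)) = UE k q i from rfl,
        phi_UE, map_mul, psi_UF, psi_ULinv, mul_assoc, ULinv_mul_UL, mul_one]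
  | F i =>
      rw [show RingQuot.mkAlgHom k (URel k q) (Ugen k (UGen.F i)) = UF k q i from rfl,
        phi_UF, map_mul, psi_UKinv, psi_UE, ← mul_assoc, UK_mul_UKinv, one_mul]
  | K i =>
      rw [show RingQuot.mkAlgHom k (URel k q) (Ugen k (UGen.K i)) = UK k q i from rfl,
        phi_UK, psi_UKinv]
  | Kinv i =>
      rw [show RingQuot.mkAlgHom k (URel k q) (Ugen k (UGen.Kinv i)) = UKinv k q i from rfl,
        phi_UKinv, psi_UK]
  | L i =>
      rw [show RingQuot.mkAlgHom k (URel k q) (Ugen k (UGen.L i)) = UL k q i from rfl,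
        phi_UL, psi_ULinv]
  | Linv i =>
      rw [show RingQuot.mkAlgHom k (URel k q) (Ugen k (UGen.Linv i)) = ULinv k q i from rfl,
        phi_ULinv, psi_UL]

/-- The algebra automorphism `φ₁` of `𝒰(q)`. -/
noncomputable def phiEquiv : UqAlgebra k q ≃ₐ[k] UqAlgebra k q :=
  AlgEquiv.ofAlgHom (phiHom k q) (psiHom k q) (phi_psi k q) (psi_phi k q)

lemma phiEquiv_apply (x : UqAlgebra k q) : phiEquiv k q x = phiHom k q x := rfl

end Phi1Aux

/-- There is a unique algebra automorphism `φ₁` of `𝒰(q)` with `φ₁(K_i) = K_i⁻`,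
`φ₁(L_i) = L_i⁻`, `φ₁(E_i) = F_i·L_i⁻` and `φ₁(F_i) = K_i⁻·E_i`. -/
theorem UqAlgebra_phi1 :
    ∃! φ : UqAlgebra k q ≃ₐ[k] UqAlgebra k q,
      ∀ i : Fin θ,
        φ (UK k q i) = UKinv k q i ∧
        φ (UL k q i) = ULinv k q i ∧
        φ (UE k q i) = UF k q i * ULinv k q i ∧
        φ (UF k q i) = UKinv k q i * UE k q i := by
  refine ⟨phiEquiv k q, fun i => ?_, fun φ' hφ' => ?_⟩
  · exact ⟨by rw [phiEquiv_apply, phi_UK], by rw [phiEquiv_apply, phi_UL],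
      by rw [phiEquiv_apply, phi_UE], by rw [phiEquiv_apply, phi_UF]⟩
  · -- uniqueness
    have hKinv : ∀ i : Fin θ, φ' (UKinv k q i) = UK k q i := by
      intro i
      have h1 : UKinv k q i * φ' (UKinv k q i) = 1 := by
        have h := congrArg φ' (UK_mul_UKinv k q i)
        rwa [map_mul, map_one, (hφ' i).1] at h
      calc φ' (UKinv k q i)
          = (UK k q i * UKinv k q i) * φ' (UKinv k q i) := by
            rw [UK_mul_UKinv, one_mul]
        _ = UK k q i * (UKinv k q i * φ' (UKinv k q i)) := by rw [mul_assoc]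
        _ = UK k q i := by rw [h1, mul_one]
    have hLinv : ∀ i : Fin θ, φ' (ULinv k q i) = UL k q i := by
      intro i
      have h1 : ULinv k q i * φ' (ULinv k q i) = 1 := by
        have h := congrArg φ' (UL_mul_ULinv k q i)
        rwa [map_mul, map_one, (hφ' i).2.1] at h
      calc φ' (ULinv k q i)
          = (UL k q i * ULinv k q i) * φ' (ULinv k q i) := by
            rw [UL_mul_ULinv, one_mul]
        _ = UL k q i * (ULinv k q i * φ' (ULinv k q i)) := by rw [mul_assoc]
        _ = UL k q i := by rw [h1, mul_one]
    apply AlgEquiv.coe_algHom_injective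
    apply RingQuot.ringQuot_ext'
    apply FreeAlgebra.hom_ext
    funext g
    simp only [Function.comp_apply, AlgHom.coe_comp, AlgEquiv.toAlgHom_eq_coe,
      AlgHom.coe_coe]
    show φ' (RingQuot.mkAlgHom k (URel k q) (Ugen k g))
        = phiEquiv k q (RingQuot.mkAlgHom k (URel k q) (Ugen k g))
    cases g with
    | E i =>
        rw [show RingQuot.mkAlgHom k (URel k q) (Ugen k (UGen.E i)) = UE k q i from rfl,
          (hφ' i).2.2.1, phiEquiv_apply, phi_UE]
    | F i =>
        rw [show RingQuot.mkAlgHom k (URel k q) (Ugen k (UGen.F i)) = UF k q i from rfl,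
          (hφ' i).2.2.2, phiEquiv_apply, phi_UF]
    | K i =>
        rw [show RingQuot.mkAlgHom k (URel k q) (Ugen k (UGen.K i)) = UK k q i from rfl,
          (hφ' i).1, phiEquiv_apply, phi_UK]
    | Kinv i =>
        rw [show RingQuot.mkAlgHom k (URel k q) (Ugen k (UGen.Kinv i)) = UKinv k q i from rfl,
          hKinv i, phiEquiv_apply, phi_UKinv]
    | L i =>
        rw [show RingQuot.mkAlgHom k (URel k q) (Ugen k (UGen.L i)) = UL k q i from rfl,
          (hφ' i).2.1, phiEquiv_apply, phi_UL]
    | Linv i =>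
        rw [show RingQuot.mkAlgHom k (URel k q) (Ugen k (UGen.Linv i)) = ULinv k q i from rfl,
          hLinv i, phiEquiv_apply, phi_ULinv]
end

section
/- The unique k-algebra homomorphism from the free associative unital k-algebra on θ generators x_1, …, x_θ to 𝒰(q) sending x_i to E_i is injective. (Equivalently, the subalgebra U⁺(q) of 𝒰(q) generated by the E_i is free on the E_i, i.e. isomorphic to the tensor algebra T(V) of a θ-dimensional vector space.) -/
variable (k : Type*) [Field k] {θ : ℕ}

variable (q : Fin θ → Fin θ → kˣ)

/-!
`𝒰(q)` acts on `T(V) = FreeAlgebra k (Fin θ)`: `E_i` by left multiplication with `x_i`, the toral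
generators by the grading automorphisms `x_j ↦ q_ij x_j` (for `K_i`) and `x_j ↦ q_ji⁻¹ x_j`
(for `L_i`), and `F_j` by `∂_j^{L_j} - ∂_j^{K_j}`, where `∂_j^σ` is the `σ`-twisted derivation
with `∂_j^σ (x_i) = δ_ij`. Then `F_j (x_i a) = x_i F_j a + δ_ij (L_j - K_j) a`, which is the
relation between `E_i` and `F_j`; the others hold because the grading automorphisms commute and
conjugate `∂_j^σ` to a multiple of itself. Since the image of `a ∈ T(V)` sends `1` to `a`, the map
`x_i ↦ E_i` is injective.
-/

namespace FreeAlgebra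

variable {R X : Type*} [CommSemiring R]

noncomputable def rescale : (X → Rˣ) →* (FreeAlgebra R X →ₐ[R] FreeAlgebra R X) where
  toFun s := lift R fun x => (s x : R) • ι R x
  map_one' := by ext; simp
  map_mul' s t := by ext; simp [mul_smul, smul_comm (s _ : R)]

@[simp] lemma rescale_ι (s : X → Rˣ) (x : X) : rescale s (ι R x) = (s x : R) • ι R x :=
  lift_ι_apply _ _

lemma rescale_ι_mul (s : X → Rˣ) (x : X) (a : FreeAlgebra R X) :
    rescale s (ι R x * a) = (s x : R) • (ι R x * rescale s a) := by
  rw [map_mul, rescale_ι, smul_mul_assoc]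

section TwistedDerivation

variable (σ : FreeAlgebra R X →ₐ[R] FreeAlgebra R X) (v : X → FreeAlgebra R X)

/-- The `(0, 1)` entry of this hom is the `σ`-derivation `∂` with `∂ (ι x) = v x`:
`a ↦ !![a, ∂ a; 0, σ a]` is multiplicative exactly when `∂ (a * b) = ∂ a * σ b + a * ∂ b`. -/
noncomputable def triangularHom : FreeAlgebra R X →ₐ[R] Matrix (Fin 2) (Fin 2) (FreeAlgebra R X) :=
  lift R fun x => !![ι R x, v x; 0, σ (ι R x)]

lemma triangularHom_diag (a : FreeAlgebra R X) :
    triangularHom σ v a 0 0 = a ∧ triangularHom σ v a 1 0 = 0 ∧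
      triangularHom σ v a 1 1 = σ a := by
  induction a with
  | grade0 r => simp [Algebra.algebraMap_eq_smul_one]
  | grade1 x => simp [triangularHom]
  | mul a b ha hb => simp [Matrix.mul_apply, Fin.sum_univ_two, ha, hb]
  | add a b ha hb => simp [ha, hb]

noncomputable def twistedDeriv : FreeAlgebra R X →ₗ[R] FreeAlgebra R X :=
  Matrix.entryLinearMap R _ 0 1 ∘ₗ (triangularHom σ v).toLinearMap

@[simp] lemma twistedDeriv_ι (x : X) : twistedDeriv σ v (ι R x) = v x := by
  simp [twistedDeriv, triangularHom]

lemma twistedDeriv_mul (a b : FreeAlgebra R X) :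
    twistedDeriv σ v (a * b) = twistedDeriv σ v a * σ b + a * twistedDeriv σ v b := by
  simp [twistedDeriv, Matrix.mul_apply, Fin.sum_univ_two, (triangularHom_diag σ v a).1,
    (triangularHom_diag σ v b).2.2, add_comm]

lemma twistedDeriv_algebraMap (r : R) : twistedDeriv σ v (algebraMap R _ r) = 0 := by
  simp [twistedDeriv, Matrix.algebraMap_matrix_apply]

lemma twistedDeriv_comp_of_commute (τ : FreeAlgebra R X →ₐ[R] FreeAlgebra R X)
    (hστ : Commute σ τ) (c : R)
    (hι : ∀ x, twistedDeriv σ v (τ (ι R x)) = c • τ (v x)) (a : FreeAlgebra R X) :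
    twistedDeriv σ v (τ a) = c • τ (twistedDeriv σ v a) := by
  have hσ (b) : σ (τ b) = τ (σ b) := DFunLike.congr_fun hστ.eq b
  induction a with
  | grade0 r => simp [twistedDeriv_algebraMap]
  | grade1 x => simp [hι]
  | mul a b ha hb => simp [twistedDeriv_mul, ha, hb, hσ, smul_add]
  | add a b ha hb => simp [ha, hb]

lemma twistedDeriv_ι_mul (x : X) (a : FreeAlgebra R X) :
    twistedDeriv σ v (ι R x * a) = v x * σ a + ι R x * twistedDeriv σ v a := by
  rw [twistedDeriv_mul, twistedDeriv_ι]

end TwistedDerivation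

lemma twistedDeriv_rescale [DecidableEq X] (s t : X → Rˣ) (x : X) (a : FreeAlgebra R X) :
    twistedDeriv (rescale s) (Pi.single x 1) (rescale t a) =
      (t x : R) • rescale t (twistedDeriv (rescale s) (Pi.single x 1) a) := by
  refine twistedDeriv_comp_of_commute _ _ _ ((Commute.all s t).map rescale) _ (fun y => ?_) a
  rcases eq_or_ne y x with rfl | hyx
  · simp
  · simp [hyx]

end FreeAlgebra

namespace UqAlgebra

open FreeAlgebra

/-- The toral generator `X` acts by `x_j ↦ toralChar X j • x_j`; the value `1` at `E_i, F_i` is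
a placeholder. -/
def toralChar : UGen θ → Fin θ → kˣ
  | .K i => q i
  | .Kinv i => (q i)⁻¹
  | .L i => (fun j => q j i)⁻¹
  | .Linv i => fun j => q j i
  | _ => 1

noncomputable def genAction : UGen θ → Module.End k (FreeAlgebra k (Fin θ))
  | .E i => LinearMap.mulLeft k (ι k i)
  | .F j => twistedDeriv (rescale (toralChar k q (.L j))) (Pi.single j 1) -
      twistedDeriv (rescale (toralChar k q (.K j))) (Pi.single j 1)
  | X => AlgHom.toEnd (rescale (toralChar k q X))

lemma genAction_of_isToral {X : UGen θ} (hX : X.IsToral) :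
    genAction k q X = AlgHom.toEnd (rescale (toralChar k q X)) := by
  cases X <;> first | rfl | exact hX.elim

lemma genAction_F_mul_toral (j : Fin θ) {X : UGen θ} (hX : X.IsToral) :
    genAction k q (.F j) * genAction k q X =
      (toralChar k q X j : k) • (genAction k q X * genAction k q (.F j)) := by
  rw [genAction_of_isToral k q hX]
  ext a
  simp only [Module.End.mul_apply, LinearMap.smul_apply, AlgHom.toEnd_apply,
    AlgHom.toLinearMap_apply, genAction, LinearMap.sub_apply, twistedDeriv_rescale, map_sub,
    smul_sub]

lemma lift_genAction_toral_mul {X Y : UGen θ} (hX : X.IsToral) (hY : Y.IsToral) :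
    lift k (genAction k q) (Ugen k X * Ugen k Y) =
      AlgHom.toEnd (rescale (toralChar k q X * toralChar k q Y)) := by
  rw [map_mul, Ugen, Ugen, lift_ι_apply, lift_ι_apply, genAction_of_isToral k q hX,
    genAction_of_isToral k q hY, map_mul, map_mul]

lemma lift_genAction_toral_mul_eq_one {X Y : UGen θ} (hX : X.IsToral) (hY : Y.IsToral)
    (hXY : toralChar k q X * toralChar k q Y = 1) :
    lift k (genAction k q) (Ugen k X * Ugen k Y) = lift k (genAction k q) 1 := by
  rw [lift_genAction_toral_mul k q hX hY, hXY, map_one, map_one, map_one]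

lemma lift_genAction_respects ⦃x y : FreeAlgebra k (UGen θ)⦄ (h : URel k q x y) :
    lift k (genAction k q) x = lift k (genAction k q) y := by
  induction h with
  | toral_comm X Y hX hY =>
    rw [lift_genAction_toral_mul k q hX hY, lift_genAction_toral_mul k q hY hX, mul_comm]
  | K_Kinv i => exact lift_genAction_toral_mul_eq_one k q trivial trivial (mul_inv_cancel _)
  | Kinv_K i => exact lift_genAction_toral_mul_eq_one k q trivial trivial (inv_mul_cancel _)
  | L_Linv i => exact lift_genAction_toral_mul_eq_one k q trivial trivial (inv_mul_cancel _)
  | Linv_L i => exact lift_genAction_toral_mul_eq_one k q trivial trivial (mul_inv_cancel _)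
  | K_E i j => ext a; simp [Ugen, genAction, toralChar, rescale_ι_mul]
  | L_E i j => ext a; simp [Ugen, genAction, toralChar, rescale_ι_mul]
  | K_F i j =>
    simp [Ugen, genAction_F_mul_toral k q j (X := .K i) trivial, smul_smul, toralChar]
  | L_F i j =>
    simp [Ugen, genAction_F_mul_toral k q j (X := .L i) trivial, smul_smul, toralChar]
  | E_F i j =>
    ext a
    rcases eq_or_ne i j with rfl | hij
    · simp [Ugen, genAction, twistedDeriv_ι_mul, mul_sub]
      abel
    · simp [Ugen, genAction, twistedDeriv_ι_mul, hij, mul_sub]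

noncomputable def freeAlgebraRep : UqAlgebra k q →ₐ[k] Module.End k (FreeAlgebra k (Fin θ)) :=
  RingQuot.liftAlgHom k ⟨lift k (genAction k q), lift_genAction_respects k q⟩

lemma freeAlgebraRep_comp_lift_UE :
    (freeAlgebraRep k q).comp (lift k (UE k q)) = Algebra.lmul k (FreeAlgebra k (Fin θ)) := by
  ext i
  simp [freeAlgebraRep, UE, Ugen, genAction]

end UqAlgebra

/-- The canonical algebra homomorphism from the free algebra on `θ` generators to `𝒰(q)`
sending `x_i` to `E_i` is injective; i.e. the subalgebra `U⁺(q)` is freely generated by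
the `E_i`. -/
theorem UqAlgebra_E_free :
    Function.Injective
      (FreeAlgebra.lift k (fun i : Fin θ => UE k q i) :
        FreeAlgebra k (Fin θ) →ₐ[k] UqAlgebra k q) := by
  refine Function.LeftInverse.injective
    (g := fun u => UqAlgebra.freeAlgebraRep k q u 1) fun a => ?_
  simpa using congr($(UqAlgebra.freeAlgebraRep_comp_lift_UE k q) a 1)
end
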